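/- If G is a plane graph, then for all positive integers k, χ(G*;k) ≤ P(G;k), where G* is the geometric dual of G. -/

import Mathlib

open Polynomial

namespace Penrose

/-- Addition in the Klein four-group `Bool × Bool` (componentwise xor). -/
def kAdd (p q : Bool × Bool) : Bool × Bool := (xor p.1 q.1, xor p.2 q.2)

lemma kAdd_eq_zero_iff : ∀ p q : Bool × Bool, kAdd p q = (false, false) ↔ p = q := by decide
lemma kAdd_eq_right_iff : ∀ p q : Bool × Bool, kAdd p q = q ↔ p = (false, false) := by decide
lemma kAdd_kAdd : ∀ p q : Bool × Bool, kAdd (kAdd p q) q = p := by decide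

/-- The flags (corner triples) of a ribbon graph with edge set `E`: each edge carries
four flags. -/
abbrev Flags (E : Type) := E × Bool × Bool

/-- A ribbon graph (cellularly embedded graph, possibly non-orientable) with edge set `E`,
in the flag (graph-encoded map) model.  The involution `σ0` (crossing edge `e`) acts on the
four flags of `e` by adding `a e` in the Klein four-group, the involution `σ2` (switching
sides of `e`) by adding `b e`, and the fixed-point-free involution `s1` (moving to the
adjacent edge-end in the same vertex-face corner) is given as data.
Vertices are the orbits of `⟨s1, σ2⟩`, edges the orbits of `⟨σ0, σ2⟩`, and the faces
(boundary components) the orbits of `⟨σ0, s1⟩`. -/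
structure RibbonGraph (E : Type) where
  s1 : Flags E → Flags E
  s1_invol : ∀ f, s1 (s1 f) = f
  s1_ne : ∀ f, s1 f ≠ f
  a : E → Bool × Bool
  b : E → Bool × Bool
  a_ne : ∀ e, a e ≠ (false, false)
  b_ne : ∀ e, b e ≠ (false, false)
  ab_ne : ∀ e, a e ≠ b e

namespace RibbonGraph

variable {E : Type}

/-- The involution crossing an edge. -/
def σ0 (G : RibbonGraph E) (f : Flags E) : Flags E := (f.1, kAdd f.2 (G.a f.1))

/-- The involution changing the side (face) of an edge, staying at the same vertex. -/
def σ2 (G : RibbonGraph E) (f : Flags E) : Flags E := (f.1, kAdd f.2 (G.b f.1))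

lemma σ2_σ2 (G : RibbonGraph E) (f : Flags E) : G.σ2 (G.σ2 f) = f := by
  cases f with
  | mk e p => simp [σ2, kAdd_kAdd]

/-- The partial Petrial `G^{τ(A)}`: give a half-twist to every edge in `A`
(replace `σ0` by `σ0 σ2` on the flags of the edges of `A`). -/
def petrial [DecidableEq E] (G : RibbonGraph E) (A : Finset E) : RibbonGraph E where
  s1 := G.s1
  s1_invol := G.s1_invol
  s1_ne := G.s1_ne
  a := fun e => if e ∈ A then kAdd (G.a e) (G.b e) else G.a e
  b := G.b
  a_ne := by
    intro e
    by_cases h : e ∈ A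
    · simpa [h, kAdd_eq_zero_iff] using G.ab_ne e
    · simpa [h] using G.a_ne e
  b_ne := G.b_ne
  ab_ne := by
    intro e
    by_cases h : e ∈ A
    · simpa [h, kAdd_eq_right_iff] using G.a_ne e
    · simpa [h] using G.ab_ne e

/-- The partial dual `G^{δ(A)}`: swap the roles of `σ0` and `σ2` on the flags of the
edges of `A`. -/
def pdual [DecidableEq E] (G : RibbonGraph E) (A : Finset E) : RibbonGraph E where
  s1 := G.s1
  s1_invol := G.s1_invol
  s1_ne := G.s1_ne
  a := fun e => if e ∈ A then G.b e else G.a e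
  b := fun e => if e ∈ A then G.a e else G.b e
  a_ne := by
    intro e
    by_cases h : e ∈ A
    · simpa [h] using G.b_ne e
    · simpa [h] using G.a_ne e
  b_ne := by
    intro e
    by_cases h : e ∈ A
    · simpa [h] using G.a_ne e
    · simpa [h] using G.b_ne e
  ab_ne := by
    intro e
    by_cases h : e ∈ A
    · simpa [h] using (G.ab_ne e).symm
    · simpa [h] using G.ab_ne e

/-- One step of the boundary (face) walk. -/
def faceStep (G : RibbonGraph E) (x y : Flags E) : Prop := y = G.σ0 x ∨ y = G.s1 x

/-- The number of faces (boundary components) of `G`. -/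
noncomputable def nFaces (G : RibbonGraph E) : ℕ := Nat.card (Quot G.faceStep)

/-- One step of the walk around a vertex. -/
def vertStep (G : RibbonGraph E) (x y : Flags E) : Prop := y = G.σ2 x ∨ y = G.s1 x

/-- The number of vertices of `G`. -/
noncomputable def nVerts (G : RibbonGraph E) : ℕ := Nat.card (Quot G.vertStep)

/-- The number of edges of `G`. -/
noncomputable def nEdges (_G : RibbonGraph E) : ℕ := Nat.card E

/-- One step of a walk in (the total space of) `G`. -/
def compStep (G : RibbonGraph E) (x y : Flags E) : Prop :=
  y = G.σ0 x ∨ y = G.σ2 x ∨ y = G.s1 x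

/-- The number of connected components of `G`. -/
noncomputable def nComps (G : RibbonGraph E) : ℕ := Nat.card (Quot G.compStep)

/-- Two flags lie at the same vertex. -/
def VertexConn (G : RibbonGraph E) : Flags E → Flags E → Prop := Relation.EqvGen G.vertStep

/-- `G` is connected. -/
def Connected (G : RibbonGraph E) : Prop := ∀ x y : Flags E, Relation.EqvGen G.compStep x y

/-- `G` is cubic: every vertex has exactly three edge-ends, i.e. six flags. -/
def Cubic (G : RibbonGraph E) : Prop :=
  ∀ x : Flags E, Nat.card {y : Flags E // G.VertexConn x y} = 6

/-- `G` is orientable. -/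
def Orientable (G : RibbonGraph E) : Prop :=
  ∃ o : Flags E → Bool, ∀ f, o (G.σ0 f) = !(o f) ∧ o (G.σ2 f) = !(o f) ∧ o (G.s1 f) = !(o f)

/-- `G` is a plane graph: orientable and of total genus `0` (Euler's formula). -/
def Plane (G : RibbonGraph E) : Prop :=
  G.Orientable ∧ G.nVerts + G.nFaces = G.nEdges + 2 * G.nComps

/-- `G` is checkerboard colourable: its faces admit a proper 2-colouring. -/
def CheckerboardColourable (G : RibbonGraph E) : Prop :=
  ∃ c : Flags E → Bool, ∀ f, c (G.σ0 f) = c f ∧ c (G.s1 f) = c f ∧ c (G.σ2 f) = !(c f)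

/-- The (topological) Penrose polynomial
`P(G;λ) = ∑_{A ⊆ E(G)} (−1)^{|A|} λ^{f(G^{τ(A)})}`. -/
noncomputable def penrose [Fintype E] [DecidableEq E] (G : RibbonGraph E) : Polynomial ℤ :=
  ∑ A ∈ (Finset.univ : Finset E).powerset,
    (-1 : Polynomial ℤ) ^ A.card * X ^ (G.petrial A).nFaces

/-- The boundary-crossing involution of `G − e`: pass through the deleted edge `e`
via `σ2`, and cross any other edge via `σ0`. -/
def delσ0 [DecidableEq E] (G : RibbonGraph E) (e : E) (f : Flags E) : Flags E :=
  if f.1 = e then G.σ2 f else G.σ0 f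

/-- One step of the boundary walk of `G − e`. -/
def faceStepDel [DecidableEq E] (G : RibbonGraph E) (e : E) (x y : Flags E) : Prop :=
  y = G.delσ0 e x ∨ y = G.s1 x

/-- The number of faces (boundary components) of `G − e`. -/
noncomputable def nFacesDel [DecidableEq E] (G : RibbonGraph E) (e : E) : ℕ :=
  Nat.card (Quot (G.faceStepDel e))

/-- The Penrose polynomial `P(G − e; λ)` of the graph obtained from `G` by deleting the
edge `e`. -/
noncomputable def penroseDel [Fintype E] [DecidableEq E] (G : RibbonGraph E) (e : E) :
    Polynomial ℤ :=
  ∑ A ∈ ((Finset.univ : Finset E).erase e).powerset,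
    (-1 : Polynomial ℤ) ^ A.card * X ^ ((G.petrial A).nFacesDel e)

/-- The Penrose polynomial `P(G/e; λ)` of the contraction `G/e := G^{δ(e)} − e`. -/
noncomputable def penroseContr [Fintype E] [DecidableEq E] (G : RibbonGraph E) (e : E) :
    Polynomial ℤ :=
  (G.pdual {e}).penroseDel e

/-- One step of a walk in `G − e` (together with the leftover vertices of `e`). -/
def compStepDel (G : RibbonGraph E) (e : E) (x y : Flags E) : Prop :=
  (x.1 ≠ e ∧ y = G.σ0 x) ∨ y = G.σ2 x ∨ y = G.s1 x

/-- The number of connected components of `G − e`. -/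
noncomputable def nCompsDel (G : RibbonGraph E) (e : E) : ℕ :=
  Nat.card (Quot (G.compStepDel e))

/-- The edge `e` is a bridge of `G`: deleting it increases the number of connected
components. -/
def IsBridge (G : RibbonGraph E) (e : E) : Prop := G.nComps < G.nCompsDel e

/-- The edge `e` is a non-twisted loop bounding a 2-cell (a trivial loop): one of its
sides is a face traversing only `e`, once. -/
def IsTrivialLoop (G : RibbonGraph E) (e : E) : Prop :=
  ∃ p : Bool × Bool, G.s1 (e, p) = G.σ0 (e, p)

/-- Isomorphism (equivalence) of ribbon graphs over the same edge set. -/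
def IsIso (G H : RibbonGraph E) : Prop :=
  ∃ ψ : Flags E ≃ Flags E, (∀ f, ψ (G.s1 f) = H.s1 (ψ f)) ∧
    (∀ f, ψ (G.σ0 f) = H.σ0 (ψ f)) ∧ (∀ f, ψ (G.σ2 f) = H.σ2 (ψ f))

/-- Given a Penrose state `σ` of the medial graph `G_m` (a choice, at the medial vertex
`v_e` of each edge `e` of `G`, of the crossing transition if `σ e = true` and of the white
split otherwise), the transition used at `v_e` by the closed curves of the state. -/
def stateσ0 (G : RibbonGraph E) (σ : E → Bool) (f : Flags E) : Flags E :=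
  if σ f.1 then G.σ0 (G.σ2 f) else G.σ0 f

/-- The number `c(s)` of closed curves of the Penrose state `σ` of the medial graph. -/
noncomputable def stateCurves (G : RibbonGraph E) (σ : E → Bool) : ℕ :=
  Nat.card (Quot (fun x y : Flags E => y = G.stateσ0 σ x ∨ y = G.s1 x))

/-- A `k`-valuation of the medial graph `G_m`: an edge colouring of `G_m` (edges of `G_m`
correspond to `s1`-orbits of flags of `G`). -/
def IsValuation {n : ℕ} (G : RibbonGraph E) (c : Flags E → Fin n) : Prop :=
  ∀ f, c (G.s1 f) = c f

/-- The medial vertex `v_e` is total in the valuation `c`: all four incident medial edges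
receive the same colour. -/
def TotalAt {n : ℕ} (G : RibbonGraph E) (c : Flags E → Fin n) (e : E) : Prop :=
  ∀ p q : Bool × Bool, c (e, p) = c (e, q)

/-- The medial vertex `v_e` has white-split type with two distinct colours. -/
def WhiteAt {n : ℕ} (G : RibbonGraph E) (c : Flags E → Fin n) (e : E) : Prop :=
  (∀ p : Bool × Bool, c (G.σ0 (e, p)) = c (e, p)) ∧
    c (e, (false, false)) ≠ c (G.σ2 (e, (false, false)))

/-- The medial vertex `v_e` has crossing type with two distinct colours. -/
def CrossAt {n : ℕ} (G : RibbonGraph E) (c : Flags E → Fin n) (e : E) : Prop :=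
  (∀ p : Bool × Bool, c (G.σ0 (G.σ2 (e, p))) = c (e, p)) ∧
    c (e, (false, false)) ≠ c (G.σ0 (e, (false, false)))

/-- An admissible valuation: at every medial vertex the two monochromatic pairs have
distinct colours and form a white split or a crossing. -/
def Admissible {n : ℕ} (G : RibbonGraph E) (c : Flags E → Fin n) : Prop :=
  G.IsValuation c ∧ ∀ e : E, G.WhiteAt c e ∨ G.CrossAt c e

/-- A permissible valuation: every medial vertex is of white-split, crossing or total
type. -/
def Permissible {n : ℕ} (G : RibbonGraph E) (c : Flags E → Fin n) : Prop :=
  G.IsValuation c ∧ ∀ e : E, G.WhiteAt c e ∨ G.CrossAt c e ∨ G.TotalAt c e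

/-- The number of crossing-type medial vertices of a valuation. -/
noncomputable def crCount {n : ℕ} (G : RibbonGraph E) (c : Flags E → Fin n) : ℕ :=
  Nat.card {e : E // G.CrossAt c e}

/-- The number of total medial vertices of a valuation. -/
noncomputable def totCount {n : ℕ} (G : RibbonGraph E) (c : Flags E → Fin n) : ℕ :=
  Nat.card {e : E // G.TotalAt c e}

/-- A proper edge 3-colouring of `G`: edges meeting at a vertex get distinct colours. -/
def ProperEdge3Coloring (G : RibbonGraph E) (κ : E → Fin 3) : Prop :=
  ∀ e e' : E, e ≠ e' →
    (∃ p q : Bool × Bool, G.VertexConn (e, p) (e', q)) → κ e ≠ κ e'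

/-- The circuit partition polynomial `j(G_m^P ; x)` of the Penrose directed medial graph
of an oriented checkerboard coloured graph `G`: its states are exactly the Penrose states
of `G_m`, so `j(G_m^P ; x) = ∑_s x^{c(s)} = ∑_{A ⊆ E(G)} x^{f(G^{τ(A)})}`. -/
noncomputable def circuitPartitionMedial [Fintype E] [DecidableEq E] (G : RibbonGraph E) :
    Polynomial ℤ :=
  ∑ A ∈ (Finset.univ : Finset E).powerset, X ^ (G.petrial A).nFaces

/-- The faces of `G`, i.e. the vertices of the geometric dual `G*`. -/
def Face (G : RibbonGraph E) := Quot G.faceStep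

instance [Finite E] (G : RibbonGraph E) : Finite (Face G) :=
  Finite.of_surjective (Quot.mk _) (fun q => Quot.exists_rep q)

/-- The underlying simple graph of the geometric dual `G*`: vertices are the faces of `G`,
two distinct faces being adjacent when they share an edge. -/
def dualGraph (G : RibbonGraph E) : SimpleGraph (Face G) where
  Adj x y := x ≠ y ∧ ∃ g : Flags E, x = Quot.mk _ g ∧ y = Quot.mk _ (G.σ2 g)
  symm := ⟨by
    rintro x y ⟨hxy, g, hx, hy⟩
    exact ⟨Ne.symm hxy, G.σ2 g, hy, by rw [σ2_σ2]; exact hx⟩⟩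
  loopless := ⟨by rintro x ⟨h, -⟩; exact h rfl⟩

/-- The chromatic polynomial of a finite simple graph, via Whitney's rank expansion:
`χ(H;λ) = ∑_{S ⊆ E(H)} (−1)^{|S|} λ^{c(S)}`, where `c(S)` is the number of connected
components of the spanning subgraph with edge set `S`. -/
noncomputable def chromPoly {V : Type} [Finite V] (H : SimpleGraph V) : Polynomial ℤ := by
  classical
  haveI := Fintype.ofFinite V
  exact ∑ S ∈ ((Finset.univ : Finset (Sym2 V)).filter (· ∈ H.edgeSet)).powerset,
    (-1 : Polynomial ℤ) ^ S.card * X ^ (Nat.card (Quot (fun x y : V => s(x, y) ∈ S)))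

/-- The chromatic polynomial `χ(G*; λ)` of the geometric dual of `G` (as a multigraph:
it is `0` when `G*` has a loop, i.e. when some edge of `G` has the same face on both of
its sides, and otherwise it is the chromatic polynomial of the underlying simple graph
of `G*`). -/
noncomputable def dualChrom [Finite E] (G : RibbonGraph E) : Polynomial ℤ := by
  classical
  exact if ∃ g : Flags E, Quot.mk G.faceStep (G.σ2 g) = Quot.mk G.faceStep g then 0
    else chromPoly G.dualGraph


/-! ### Auxiliary development for stmt18 -/

section StmtAux

open Finset

lemma kAdd_comm' : ∀ p q : Bool × Bool, kAdd p q = kAdd q p := by decide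
lemma kAdd_aux1 : ∀ p a b : Bool × Bool, kAdd p (kAdd a b) = kAdd (kAdd p b) a := by decide
lemma kAdd_aux2 : ∀ p a b : Bool × Bool, kAdd (kAdd p b) a = kAdd (kAdd p a) b := by decide
lemma kAdd_zero : ∀ p : Bool × Bool, kAdd (false, false) p = p := by decide
lemma klein_cover : ∀ a b p : Bool × Bool, a ≠ (false,false) → b ≠ (false,false) → a ≠ b →
    p = (false,false) ∨ p = a ∨ p = b ∨ p = kAdd a b := by decide
lemma klein_cover' : ∀ a b p q : Bool × Bool, a ≠ (false,false) → b ≠ (false,false) → a ≠ b →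
    p = q ∨ p = kAdd q a ∨ p = kAdd q b ∨ p = kAdd q (kAdd a b) := by decide

variable {E : Type}

namespace RibbonGraphAux

variable (G : RibbonGraph E)

lemma σ0_fst (f : Flags E) : (G.σ0 f).1 = f.1 := rfl
lemma σ2_fst (f : Flags E) : (G.σ2 f).1 = f.1 := rfl

lemma σ0_σ0 (f : Flags E) : G.σ0 (G.σ0 f) = f := by
  cases f; simp [RibbonGraph.σ0, kAdd_kAdd]

lemma σ0_σ2_comm (f : Flags E) : G.σ0 (G.σ2 f) = G.σ2 (G.σ0 f) := by
  cases f with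
  | mk e p => simp only [RibbonGraph.σ0, RibbonGraph.σ2, kAdd_aux2]

lemma σ0σ2_invol (f : Flags E) : G.σ0 (G.σ2 (G.σ0 (G.σ2 f))) = f := by
  rw [σ0_σ2_comm, σ0_σ0, G.σ2_σ2]

lemma s1_inj : Function.Injective G.s1 :=
  Function.LeftInverse.injective G.s1_invol

lemma petrial_σ0 [DecidableEq E] (A : Finset E) (f : Flags E) :
    (G.petrial A).σ0 f = if f.1 ∈ A then G.σ0 (G.σ2 f) else G.σ0 f := by
  cases f with
  | mk e p =>
    by_cases h : e ∈ A <;>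
      simp only [RibbonGraph.σ0, RibbonGraph.σ2, RibbonGraph.petrial, h, if_pos, if_neg,
        not_false_iff, ite_true, ite_false]
    rw [kAdd_aux1, kAdd_comm' p]

/-- quotient projections -/
def vQ (f : Flags E) : Quot G.vertStep := Quot.mk G.vertStep f
def fQ (f : Flags E) : Quot G.faceStep := Quot.mk G.faceStep f
def cQ (f : Flags E) : Quot G.compStep := Quot.mk G.compStep f

lemma vQ_σ2 (f : Flags E) : vQ G (G.σ2 f) = vQ G f :=
  (Quot.sound (show G.vertStep f (G.σ2 f) from Or.inl rfl)).symm
lemma vQ_s1 (f : Flags E) : vQ G (G.s1 f) = vQ G f :=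
  (Quot.sound (show G.vertStep f (G.s1 f) from Or.inr rfl)).symm
lemma fQ_σ0 (f : Flags E) : fQ G (G.σ0 f) = fQ G f :=
  (Quot.sound (show G.faceStep f (G.σ0 f) from Or.inl rfl)).symm
lemma fQ_s1 (f : Flags E) : fQ G (G.s1 f) = fQ G f :=
  (Quot.sound (show G.faceStep f (G.s1 f) from Or.inr rfl)).symm
lemma cQ_σ0 (f : Flags E) : cQ G (G.σ0 f) = cQ G f :=
  (Quot.sound (show G.compStep f (G.σ0 f) from Or.inl rfl)).symm
lemma cQ_σ2 (f : Flags E) : cQ G (G.σ2 f) = cQ G f :=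
  (Quot.sound (show G.compStep f (G.σ2 f) from Or.inr (Or.inl rfl))).symm
lemma cQ_s1 (f : Flags E) : cQ G (G.s1 f) = cQ G f :=
  (Quot.sound (show G.compStep f (G.s1 f) from Or.inr (Or.inr rfl))).symm

end RibbonGraphAux

/-- functions invariant under a relation = functions on the quotient -/
def invSubEquiv {α β : Type*} (r : α → α → Prop) :
    {c : α → β // ∀ x y, r x y → c x = c y} ≃ (Quot r → β) where
  toFun c := Quot.lift c.1 c.2
  invFun φ := ⟨fun x => φ (Quot.mk r x), fun x y h => by
    show φ (Quot.mk r x) = φ (Quot.mk r y); rw [Quot.sound h]⟩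
  left_inv c := rfl
  right_inv φ := funext fun q => Quot.inductionOn q fun x => rfl

instance finiteQuot {α : Type*} [Finite α] (r : α → α → Prop) : Finite (Quot r) :=
  Finite.of_surjective (Quot.mk r) Quot.mk_surjective

lemma card_inv_fun {α : Type} [Finite α] (r : α → α → Prop) (k : ℕ) :
    (k : ℕ) ^ Nat.card (Quot r) = Nat.card {c : α → Fin k // ∀ x y, r x y → c x = c y} := by
  rw [Nat.card_congr (invSubEquiv r), Nat.card_fun, Nat.card_eq_fintype_card (α := Fin k),
    Fintype.card_fin]

end StmtAux
section PartA

open Finset RibbonGraphAux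

variable {E : Type} [Fintype E] [DecidableEq E] (G : RibbonGraph E)

/-- the medial vertex at `e` is white-compatible with `c` -/
def whiteCond {k : ℕ} (c : Flags E → Fin k) (e : E) : Prop :=
  ∀ p : Bool × Bool, c (G.σ0 (e, p)) = c (e, p)

/-- the medial vertex at `e` is cross-compatible with `c` -/
def crossCond {k : ℕ} (c : Flags E → Fin k) (e : E) : Prop :=
  ∀ p : Bool × Bool, c (G.σ0 (G.σ2 (e, p))) = c (e, p)

def s1Inv {k : ℕ} (c : Flags E → Fin k) : Prop := ∀ f, c (G.s1 f) = c f

instance {k : ℕ} (c : Flags E → Fin k) (e : E) : Decidable (whiteCond G c e) :=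
  inferInstanceAs (Decidable (∀ p : Bool × Bool, c (G.σ0 (e, p)) = c (e, p)))

instance {k : ℕ} (c : Flags E → Fin k) (e : E) : Decidable (crossCond G c e) :=
  inferInstanceAs (Decidable (∀ p : Bool × Bool, c (G.σ0 (G.σ2 (e, p))) = c (e, p)))

instance {k : ℕ} (c : Flags E → Fin k) : Decidable (s1Inv G c) :=
  inferInstanceAs (Decidable (∀ f, c (G.s1 f) = c f))

lemma face_count (A : Finset E) (k : ℕ) :
    ((k : ℤ)) ^ (G.petrial A).nFaces =
      ((univ.filter fun c : Flags E → Fin k =>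
          s1Inv G c ∧ ∀ e, if e ∈ A then crossCond G c e else whiteCond G c e).card : ℤ) := by
  classical
  have h3 : ∀ c : Flags E → Fin k,
      (∀ x y, (G.petrial A).faceStep x y → c x = c y) ↔
        (s1Inv G c ∧ ∀ e, if e ∈ A then crossCond G c e else whiteCond G c e) := by
    intro c
    constructor
    · intro h
      refine ⟨fun f => (h f ((G.petrial A).s1 f) (Or.inr rfl)).symm, fun e => ?_⟩
      by_cases he : e ∈ A
      · rw [if_pos he]
        intro p
        have := h (e,p) ((G.petrial A).σ0 (e,p)) (Or.inl rfl)
        rwa [petrial_σ0, if_pos he, eq_comm] at this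
      · rw [if_neg he]
        intro p
        have := h (e,p) ((G.petrial A).σ0 (e,p)) (Or.inl rfl)
        rwa [petrial_σ0, if_neg he, eq_comm] at this
    · rintro ⟨h1, h2⟩ x y (rfl | rfl)
      · rw [petrial_σ0]
        rcases x with ⟨e, p⟩
        have := h2 e
        by_cases he : e ∈ A
        · rw [if_pos he] at this ⊢
          exact (this p).symm
        · rw [if_neg he] at this ⊢
          exact (this p).symm
      · exact (h1 x).symm
  have h2 := card_inv_fun (G.petrial A).faceStep k
  have : (k:ℤ) ^ (G.petrial A).nFaces = ((k ^ Nat.card (Quot (G.petrial A).faceStep) : ℕ) : ℤ) := by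
    push_cast
    rfl
  rw [this, h2]
  congr 1
  rw [Nat.card_eq_fintype_card, Fintype.card_subtype]
  congr 1
  exact Finset.filter_congr fun c _ => h3 c

lemma penrose_eval (k : ℕ) :
    G.penrose.eval (k : ℤ) =
      ∑ c ∈ univ.filter (fun c : Flags E → Fin k => s1Inv G c),
        ∏ e : E, ((if crossCond G c e then -1 else 0) + (if whiteCond G c e then 1 else 0) : ℤ) := by
  classical
  rw [RibbonGraph.penrose, Polynomial.eval_finset_sum]
  simp only [Polynomial.eval_mul, Polynomial.eval_pow, Polynomial.eval_neg, Polynomial.eval_one,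
    Polynomial.eval_X]
  rw [Finset.sum_congr rfl (fun A _ => by rw [face_count G A k])]
  have prodform : ∀ c : Flags E → Fin k,
      (∏ e : E, ((if crossCond G c e then -1 else 0) + (if whiteCond G c e then 1 else 0) : ℤ)) =
      ∑ A ∈ (univ : Finset E).powerset,
        (∏ e ∈ A, (if crossCond G c e then (-1:ℤ) else 0)) *
          ∏ e ∈ univ \ A, (if whiteCond G c e then (1:ℤ) else 0) := by
    intro c
    exact Finset.prod_add _ _ _
  rw [Finset.sum_congr rfl fun c _ => prodform c, Finset.sum_comm]
  apply Finset.sum_congr rfl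
  intro A hA
  have key : ∀ c : Flags E → Fin k,
      (∏ e ∈ A, (if crossCond G c e then (-1:ℤ) else 0)) *
          (∏ e ∈ univ \ A, (if whiteCond G c e then (1:ℤ) else 0)) =
      if (∀ e, if e ∈ A then crossCond G c e else whiteCond G c e) then (-1:ℤ)^A.card else 0 := by
    intro c
    by_cases h : ∀ e, if e ∈ A then crossCond G c e else whiteCond G c e
    · rw [if_pos h]
      have c1 : ∀ e ∈ A, (if crossCond G c e then (-1:ℤ) else 0) = -1 := fun e he =>
        if_pos (by have := h e; rwa [if_pos he] at this)
      have c2 : ∀ e ∈ univ \ A, (if whiteCond G c e then (1:ℤ) else 0) = 1 := fun e he =>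
        if_pos (by have := h e; rwa [if_neg (Finset.mem_sdiff.mp he).2] at this)
      rw [Finset.prod_congr rfl c1, Finset.prod_congr rfl c2, Finset.prod_const,
        Finset.prod_const, one_pow, mul_one]
    · rw [if_neg h]
      push_neg at h
      obtain ⟨e, he⟩ := h
      by_cases hm : e ∈ A
      · rw [if_pos hm] at he
        rw [Finset.prod_eq_zero hm (if_neg he : (if crossCond G c e then (-1:ℤ) else 0) = 0), zero_mul]
      · rw [if_neg hm] at he
        rw [Finset.prod_eq_zero (Finset.mem_sdiff.mpr ⟨Finset.mem_univ e, hm⟩)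
          (if_neg he : (if whiteCond G c e then (1:ℤ) else 0) = 0), mul_zero]
  rw [Finset.sum_congr rfl fun c _ => key c]
  rw [← Finset.sum_filter, Finset.filter_filter, Finset.sum_const, nsmul_eq_mul, mul_comm]

end PartA
section PartB

open Finset RibbonGraphAux

lemma chrom_generic {V : Type} [Finite V] (H : SimpleGraph V) (k : ℕ)
    (P : Finset (Sym2 V)) (hP : ∀ z, z ∈ P ↔ z ∈ H.edgeSet) :
    (∑ S ∈ P.powerset,
        (-1:ℤ)^S.card * (k:ℤ) ^ (Nat.card (Quot (fun x y : V => s(x, y) ∈ S)))) =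
      (Nat.card {φ : V → Fin k // ∀ x y, H.Adj x y → φ x ≠ φ y} : ℤ) := by
  classical
  haveI := Fintype.ofFinite V
  have hcount : ∀ S : Finset (Sym2 V),
      ((k:ℤ)) ^ (Nat.card (Quot (fun x y : V => s(x, y) ∈ S))) =
        ((univ.filter fun φ : V → Fin k => ∀ z ∈ S, Sym2.IsDiag (z.map φ)).card : ℤ) := by
    intro S
    have h2 := card_inv_fun (fun x y : V => s(x, y) ∈ S) k
    have h3 : ∀ φ : V → Fin k,
        (∀ x y, s(x,y) ∈ S → φ x = φ y) ↔ (∀ z ∈ S, Sym2.IsDiag (z.map φ)) := by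
      intro φ
      constructor
      · intro h z hz
        induction z with
        | _ x y => rw [Sym2.map_pair_eq, Sym2.isDiag_iff_proj_eq]; exact h x y hz
      · intro h x y hz
        have := h s(x,y) hz
        rwa [Sym2.map_pair_eq, Sym2.isDiag_iff_proj_eq] at this
    have hc : ((k:ℤ)) ^ (Nat.card (Quot (fun x y : V => s(x, y) ∈ S))) =
        ((k ^ (Nat.card (Quot (fun x y : V => s(x, y) ∈ S))) : ℕ) : ℤ) := by push_cast; rfl
    rw [hc, h2]
    congr 1
    rw [Nat.card_eq_fintype_card, Fintype.card_subtype]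
    congr 1
    exact Finset.filter_congr fun φ _ => h3 φ
  rw [Finset.sum_congr rfl fun S _ => by rw [hcount S]]
  have swap : ∑ S ∈ P.powerset,
      (-1:ℤ)^S.card * ((univ.filter fun φ : V → Fin k => ∀ z ∈ S, Sym2.IsDiag (z.map φ)).card : ℤ)
      = ∑ φ ∈ (univ : Finset (V → Fin k)), ∑ S ∈ P.powerset,
          if (∀ z ∈ S, Sym2.IsDiag (z.map φ)) then (-1:ℤ)^S.card else 0 := by
    rw [Finset.sum_comm]
    apply Finset.sum_congr rfl
    intro S hS
    rw [← Finset.sum_filter, Finset.sum_const, nsmul_eq_mul, mul_comm]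
  rw [swap]
  have inner : ∀ φ : V → Fin k,
      (∑ S ∈ P.powerset, if (∀ z ∈ S, Sym2.IsDiag (z.map φ)) then (-1:ℤ)^S.card else 0)
      = if (∀ x y, H.Adj x y → φ x ≠ φ y) then 1 else 0 := by
    intro φ
    set M := P.filter (fun z => Sym2.IsDiag (z.map φ)) with hM
    have hMsub : M ⊆ P := Finset.filter_subset _ _
    have step1 : ∀ S ∈ P.powerset,
        (if (∀ z ∈ S, Sym2.IsDiag (z.map φ)) then (-1:ℤ)^S.card else 0)
          = if S ⊆ M then (-1:ℤ)^S.card else 0 := by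
      intro S hS
      rw [Finset.mem_powerset] at hS
      congr 1
      simp only [eq_iff_iff]
      constructor
      · intro h z hz
        exact Finset.mem_filter.mpr ⟨hS hz, h z hz⟩
      · intro h z hz
        exact (Finset.mem_filter.mp (h hz)).2
    rw [Finset.sum_congr rfl step1, ← Finset.sum_filter]
    have hpf : P.powerset.filter (· ⊆ M) = M.powerset := by
      ext S
      simp only [Finset.mem_filter, Finset.mem_powerset]
      exact ⟨fun h => h.2, fun h => ⟨h.trans hMsub, h⟩⟩
    rw [hpf]
    have base : ∑ S ∈ M.powerset, (-1:ℤ)^S.card = if M = ∅ then 1 else 0 := by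
      have := Finset.prod_add (fun _ : Sym2 V => (-1:ℤ)) (fun _ => 1) M
      simp only [Finset.prod_const, one_pow, mul_one, neg_add_cancel] at this
      rw [← this]
      by_cases h : M = ∅
      · simp [h]
      · rw [if_neg h, zero_pow]
        exact fun hc => h (Finset.card_eq_zero.mp hc)
    rw [base]
    congr 1
    simp only [eq_iff_iff]
    constructor
    · intro h x y hadj heq
      have hz : s(x,y) ∈ P := (hP _).mpr (H.mem_edgeSet.mpr hadj)
      have : s(x,y) ∈ M := Finset.mem_filter.mpr
        ⟨hz, by rw [Sym2.map_pair_eq, Sym2.isDiag_iff_proj_eq]; exact heq⟩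
      rw [h] at this
      exact absurd this (Finset.notMem_empty _)
    · intro h
      rw [Finset.eq_empty_iff_forall_notMem]
      intro z hz
      rw [hM, Finset.mem_filter] at hz
      obtain ⟨hzP, hzD⟩ := hz
      have hzE := (hP z).mp hzP
      induction z with
      | _ x y =>
        rw [Sym2.map_pair_eq, Sym2.isDiag_iff_proj_eq] at hzD
        exact h x y (H.mem_edgeSet.mp hzE) hzD
  rw [Finset.sum_congr rfl fun φ _ => inner φ, ← Finset.sum_filter, Finset.sum_const,
    nsmul_eq_mul, mul_one, Nat.card_eq_fintype_card, Fintype.card_subtype]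

lemma chromPoly_eval_count {V : Type} [Finite V] (H : SimpleGraph V) (k : ℕ) :
    (RibbonGraph.chromPoly H).eval (k : ℤ) =
      (Nat.card {φ : V → Fin k // ∀ x y, H.Adj x y → φ x ≠ φ y} : ℤ) := by
  rw [RibbonGraph.chromPoly]
  rw [Polynomial.eval_finset_sum]
  simp only [Polynomial.eval_mul, Polynomial.eval_pow, Polynomial.eval_neg, Polynomial.eval_one,
    Polynomial.eval_X]
  exact chrom_generic H k _ (fun z => by simp [Finset.mem_filter])

end PartB
section PartB2

open Finset RibbonGraphAux

variable {E : Type} [Fintype E] [DecidableEq E] (G : RibbonGraph E)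

def properC {k : ℕ} (c : Flags E → Fin k) : Prop :=
  (∀ f, c (G.σ0 f) = c f) ∧ (∀ f, c (G.s1 f) = c f) ∧ (∀ f, c (G.σ2 f) ≠ c f)

instance {k : ℕ} (c : Flags E → Fin k) : Decidable (properC G c) :=
  inferInstanceAs (Decidable (_ ∧ _ ∧ _))

lemma dualChrom_eval (k : ℕ) :
    G.dualChrom.eval (k:ℤ) = (Nat.card {c : Flags E → Fin k // properC G c} : ℤ) := by
  classical
  rw [RibbonGraph.dualChrom]
  split_ifs with h
  · obtain ⟨g, hg⟩ := h
    rw [Polynomial.eval_zero]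
    have he : IsEmpty {c : Flags E → Fin k // properC G c} := by
      constructor
      rintro ⟨c, h0, h1, h2⟩
      have hlift : ∀ x y, G.faceStep x y → c x = c y := by
        rintro x y (rfl|rfl)
        exacts [(h0 x).symm, (h1 x).symm]
      have : Quot.lift c hlift (Quot.mk G.faceStep (G.σ2 g)) =
          Quot.lift c hlift (Quot.mk G.faceStep g) := by rw [hg]
      exact h2 g this
    rw [Nat.card_of_isEmpty]
    norm_num
  · rw [chromPoly_eval_count]
    congr 1
    apply Nat.card_congr
    push_neg at h
    refine ⟨fun φ => ⟨fun f => φ.1 (Quot.mk G.faceStep f), ?_, ?_, ?_⟩,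
      fun c => ⟨Quot.lift c.1 ?_, ?_⟩, ?_, ?_⟩
    · exact fun f => congrArg φ.1 (fQ_σ0 G f)
    · exact fun f => congrArg φ.1 (fQ_s1 G f)
    · intro f
      have hadj : G.dualGraph.Adj (Quot.mk G.faceStep f) (Quot.mk G.faceStep (G.σ2 f)) :=
        ⟨Ne.symm (h f), f, rfl, rfl⟩
      exact Ne.symm (φ.2 _ _ hadj)
    · rintro x y (rfl|rfl)
      exacts [(c.2.1 x).symm, (c.2.2.1 x).symm]
    · rintro x y ⟨hne, g, rfl, rfl⟩
      exact Ne.symm (c.2.2.2 g)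
    · intro φ
      apply Subtype.ext
      funext q
      exact Quot.inductionOn q fun f => rfl
    · intro c
      apply Subtype.ext
      funext f
      rfl

end PartB2
section Bounding

open Finset RibbonGraphAux

abbrev V2 := ZMod 2

lemma v2_add_self (a : V2) : a + a = 0 := by revert a; decide
lemma v2_add_eq_zero {a b : V2} : a + b = 0 ↔ a = b := by revert a b; decide
lemma v2_cancel (a b : V2) : a + b + b = a := by revert a b; decide

lemma sum_pair_inv {α : Type} [Fintype α] (f : α → V2) (g : α → α)
    (hg2 : ∀ x, g (g x) = x) (hgne : ∀ x, g x ≠ x) (hf : ∀ x, f (g x) = f x) :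
    ∑ x, f x = 0 := by
  apply Finset.sum_ninvolution g
  · intro a; rw [hf]; exact v2_add_self _
  · intro a _; exact hgne a
  · intro a; exact Finset.mem_univ _
  · exact hg2

variable {E : Type} [Fintype E] [DecidableEq E] (G : RibbonGraph E)

/-- the boundary map -/
noncomputable def bdry :
    ((Quot G.vertStep → V2) × (Quot G.faceStep → V2)) →ₗ[V2] (Flags E → V2) where
  toFun αβ := fun f => αβ.1 (vQ G f) + αβ.2 (fQ G f)
  map_add' x y := by funext f; show (x.1 + y.1) _ + (x.2 + y.2) _ = _; simp [Pi.add_apply]; ring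
  map_smul' m x := by
    funext f
    show (m • x.1) _ + (m • x.2) _ = m • (x.1 _ + x.2 _)
    simp [Pi.smul_apply, smul_eq_mul]; ring

/-- even, s1-invariant chains -/
noncomputable def Zsub : Submodule V2 (Flags E → V2) where
  carrier := {z | (∀ f, z (G.s1 f) = z f) ∧ ∀ e : E, ∑ p : Bool × Bool, z (e, p) = 0}
  add_mem' := by
    rintro a b ⟨ha1, ha2⟩ ⟨hb1, hb2⟩
    refine ⟨fun f => by simp only [Pi.add_apply, ha1, hb1], fun e => ?_⟩
    simp only [Pi.add_apply]
    rw [Finset.sum_add_distrib, ha2, hb2, add_zero]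
  zero_mem' := ⟨fun f => rfl, fun e => by simp⟩
  smul_mem' := by
    rintro m a ⟨h1, h2⟩
    refine ⟨fun f => by simp only [Pi.smul_apply, h1], fun e => ?_⟩
    simp only [Pi.smul_apply, smul_eq_mul]
    rw [← Finset.mul_sum, h2, mul_zero]

/-- projection from vertex classes to components -/
def projVC : Quot G.vertStep → Quot G.compStep :=
  Quot.lift (cQ G) (by rintro x y (rfl | rfl); exacts [(cQ_σ2 G x).symm, (cQ_s1 G x).symm])

def projFC : Quot G.faceStep → Quot G.compStep :=
  Quot.lift (cQ G) (by rintro x y (rfl | rfl); exacts [(cQ_σ0 G x).symm, (cQ_s1 G x).symm])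

noncomputable def PsiMap :
    (Quot G.compStep → V2) →ₗ[V2] ((Quot G.vertStep → V2) × (Quot G.faceStep → V2)) where
  toFun γ := (fun q => γ (projVC G q), fun q => γ (projFC G q))
  map_add' x y := rfl
  map_smul' m x := rfl

lemma PsiMap_inj : Function.Injective (PsiMap G) := by
  intro γ γ' h
  funext q
  induction q using Quot.inductionOn with
  | h f => exact congrFun (congrArg Prod.fst h) (vQ G f)

lemma range_PsiMap : LinearMap.range (PsiMap G) = LinearMap.ker (bdry G) := by
  ext αβ
  simp only [LinearMap.mem_range, LinearMap.mem_ker]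
  constructor
  · rintro ⟨γ, rfl⟩
    funext f
    show γ (projVC G (vQ G f)) + γ (projFC G (fQ G f)) = 0
    have : projVC G (vQ G f) = projFC G (fQ G f) := rfl
    rw [this, v2_add_self]
  · intro h
    have hk : ∀ f, αβ.1 (vQ G f) = αβ.2 (fQ G f) := by
      intro f
      have := congrFun h f
      exact v2_add_eq_zero.mp this
    have hwd : ∀ x y, G.compStep x y → αβ.1 (vQ G x) = αβ.1 (vQ G y) := by
      rintro x y (rfl | rfl | rfl)
      · rw [hk x, hk (G.σ0 x), fQ_σ0]
      · rw [vQ_σ2]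
      · rw [vQ_s1]
    refine ⟨Quot.lift (fun f => αβ.1 (vQ G f)) hwd, ?_⟩
    have h1 : (fun q => Quot.lift (fun f => αβ.1 (vQ G f)) hwd (projVC G q)) = αβ.1 := by
      funext q
      induction q using Quot.inductionOn with
      | h f => rfl
    have h2 : (fun q => Quot.lift (fun f => αβ.1 (vQ G f)) hwd (projFC G q)) = αβ.2 := by
      funext q
      induction q using Quot.inductionOn with
      | h f => exact hk f
    exact Prod.ext h1 h2

/-- s1-orbit (medial edge) relation -/
def s1Rel : Flags E → Flags E → Prop := fun a b => b = G.s1 a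

lemma s1orb_aux : ∀ x y : Flags E, Relation.EqvGen (s1Rel G) x y → (y = x ∨ y = G.s1 x) := by
  intro x y h
  induction h with
    | rel a b hab => exact Or.inr hab
    | refl a => exact Or.inl rfl
    | symm a b _ ih =>
      rcases ih with rfl | rfl
      · exact Or.inl rfl
      · right; rw [G.s1_invol]
    | trans a b c _ _ ih1 ih2 =>
      rcases ih1 with rfl | rfl
      · exact ih2
      · rcases ih2 with rfl | rfl
        · exact Or.inr rfl
        · left; rw [G.s1_invol]

lemma s1orb_eq (x y : Flags E) :
    Quot.mk (s1Rel G) x = Quot.mk (s1Rel G) y ↔ (y = x ∨ y = G.s1 x) := by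
  constructor
  · intro h
    exact s1orb_aux G x y (Quot.eq.mp h)
  · rintro (rfl | rfl)
    · rfl
    · exact Quot.sound rfl

noncomputable def Lmap : ((Quot (s1Rel G)) → V2) →ₗ[V2] (E → V2) where
  toFun u := fun e => ∑ p : Bool × Bool, u (Quot.mk _ (e, p))
  map_add' x y := by funext e; simp [Pi.add_apply, Finset.sum_add_distrib]
  map_smul' m x := by funext e; simp [Pi.smul_apply, smul_eq_mul, Finset.mul_sum]

lemma zsub_eq_map :
    Zsub G = Submodule.map (LinearMap.funLeft V2 V2 (Quot.mk (s1Rel G))) (LinearMap.ker (Lmap G)) := by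
  ext z
  simp only [Submodule.mem_map, LinearMap.mem_ker]
  constructor
  · intro hz
    obtain ⟨hz1, hz2⟩ := hz
    have hwd : ∀ a b, s1Rel G a b → z a = z b := by
      rintro a b rfl
      exact (hz1 a).symm
    refine ⟨Quot.lift z hwd, ?_, ?_⟩
    · funext e
      exact hz2 e
    · rfl
  · rintro ⟨u, hu, rfl⟩
    constructor
    · intro f
      show u (Quot.mk _ (G.s1 f)) = u (Quot.mk _ f)
      have : Quot.mk (s1Rel G) f = Quot.mk (s1Rel G) (G.s1 f) := Quot.sound rfl
      rw [← this]
    · intro e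
      exact congrFun hu e

/-- indicator edge vectors -/
noncomputable def edgeInd (x : E) : E → V2 := fun e => if e = x then 1 else 0

def eQE (e : E) : Quot G.compStep := cQ G (e, (false, false))

lemma cQ_flag (f : Flags E) : cQ G f = eQE G f.1 := by
  rcases f with ⟨e, p⟩
  show cQ G (e, p) = cQ G (e, (false, false))
  rcases klein_cover (G.a e) (G.b e) p (G.a_ne e) (G.b_ne e) (G.ab_ne e) with rfl | rfl | rfl | rfl
  · rfl
  · have h : G.σ0 (e, (false, false)) = (e, G.a e) := by
      show (e, kAdd (false,false) (G.a e)) = _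
      rw [kAdd_zero]
    rw [← h, cQ_σ0]
  · have h : G.σ2 (e, (false, false)) = (e, G.b e) := by
      show (e, kAdd (false,false) (G.b e)) = _
      rw [kAdd_zero]
    rw [← h, cQ_σ2]
  · have h : G.σ0 (G.σ2 (e, (false, false))) = (e, kAdd (G.a e) (G.b e)) := by
      show (e, kAdd (kAdd (false,false) (G.b e)) (G.a e)) = _
      rw [kAdd_zero, kAdd_comm']
    rw [← h, cQ_σ0, cQ_σ2]

end Bounding
section Bounding2

open Finset RibbonGraphAux

open scoped Classical

variable {E : Type} [Fintype E] [DecidableEq E] (G : RibbonGraph E)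

noncomputable def Theta : (E → V2) →ₗ[V2] (Quot G.compStep → V2) where
  toFun d := fun q => ∑ e ∈ univ.filter (fun e => eQE G e = q), d e
  map_add' x y := by funext q; simp [Pi.add_apply, Finset.sum_add_distrib]
  map_smul' m x := by funext q; simp [Pi.smul_apply, smul_eq_mul, Finset.mul_sum]

lemma v2_mid (x y z : V2) : (x + y) + (y + z) = x + z := by revert x y z; decide

lemma sum_flag_ind (a : Flags E) (e : E) :
    (∑ p : Bool × Bool, if (e, p) = a then (1:V2) else 0) = edgeInd a.1 e := by
  rcases a with ⟨e', p'⟩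
  unfold edgeInd
  by_cases h : e = e'
  · subst h
    simp only [Prod.mk.injEq, eq_self_iff_true, true_and, if_true]
    rw [Finset.sum_ite_eq' univ p' fun _ => (1:V2)]
    exact if_pos (mem_univ _)
  · simp only [Prod.mk.injEq, h, false_and, if_false, Finset.sum_const_zero]

lemma edgeInd_mem_range : ∀ x y : Flags E, Relation.EqvGen G.compStep x y →
    (fun e => edgeInd x.1 e + edgeInd y.1 e) ∈ LinearMap.range (Lmap G) := by
  intro x y h
  induction h with
  | rel a b hab =>
    rcases hab with rfl | rfl | rfl
    · have hz : (fun e => edgeInd a.1 e + edgeInd (G.σ0 a).1 e) = 0 := by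
        funext e; exact v2_add_self _
      rw [hz]; exact Submodule.zero_mem _
    · have hz : (fun e => edgeInd a.1 e + edgeInd (G.σ2 a).1 e) = 0 := by
        funext e; exact v2_add_self _
      rw [hz]; exact Submodule.zero_mem _
    · refine ⟨(fun o => if o = Quot.mk (s1Rel G) a then 1 else 0), ?_⟩
      funext e
      show (∑ p : Bool × Bool,
        if Quot.mk (s1Rel G) (e,p) = Quot.mk (s1Rel G) a then (1:V2) else 0) = _
      have hcond : ∀ p : Bool × Bool,
          ((Quot.mk (s1Rel G) (e,p) = Quot.mk (s1Rel G) a) ↔ ((e,p) = a ∨ (e,p) = G.s1 a)) :=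
        fun p => eq_comm.trans (s1orb_eq G a (e,p))
      have hsplit : ∀ p : Bool × Bool,
          (if ((e,p) = a ∨ (e,p) = G.s1 a) then (1:V2) else 0)
            = (if (e,p) = a then (1:V2) else 0) + (if (e,p) = G.s1 a then (1:V2) else 0) := by
        intro p
        by_cases h1 : (e,p) = a
        · rw [if_pos (Or.inl h1), if_pos h1, if_neg, add_zero]
          rw [← h1]
          intro hcon
          exact G.s1_ne a (by rw [← h1, ← hcon])
        · by_cases h2 : (e,p) = G.s1 a
          · rw [if_pos (Or.inr h2), if_neg h1, if_pos h2, zero_add]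
          · rw [if_neg _, if_neg h1, if_neg h2, add_zero]
            rintro (h|h)
            exacts [h1 h, h2 h]
      simp only [hcond, hsplit]
      rw [Finset.sum_add_distrib, sum_flag_ind, sum_flag_ind]
  | refl a =>
    have hz : (fun e => edgeInd a.1 e + edgeInd a.1 e) = 0 := by
      funext e; exact v2_add_self _
    rw [hz]; exact Submodule.zero_mem _
  | symm a b _ ih =>
    have hc : (fun e => edgeInd b.1 e + edgeInd a.1 e)
        = (fun e => edgeInd a.1 e + edgeInd b.1 e) := by
      funext e; exact add_comm _ _
    rw [hc]; exact ih
  | trans a b c _ _ ih1 ih2 =>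
    have hm := Submodule.add_mem _ ih1 ih2
    have hc : (fun e => edgeInd a.1 e + edgeInd b.1 e) + (fun e => edgeInd b.1 e + edgeInd c.1 e)
        = (fun e => edgeInd a.1 e + edgeInd c.1 e) := by
      funext e; exact v2_mid _ _ _
    rwa [hc] at hm

lemma range_L_le : LinearMap.range (Lmap G) ≤ LinearMap.ker (Theta G) := by
  rintro d ⟨u, rfl⟩
  rw [LinearMap.mem_ker]
  funext q
  show (∑ e ∈ univ.filter (fun e => eQE G e = q), ∑ p : Bool × Bool, u (Quot.mk _ (e,p))) = 0
  rw [Finset.sum_filter]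
  have hpull : ∀ e : E,
      (if eQE G e = q then (∑ p : Bool × Bool, u (Quot.mk (s1Rel G) (e,p))) else 0)
      = ∑ p : Bool × Bool, (if eQE G e = q then u (Quot.mk (s1Rel G) (e,p)) else 0) := by
    intro e
    by_cases h : eQE G e = q
    · simp [h]
    · simp [h]
  rw [Finset.sum_congr rfl fun e _ => hpull e]
  have hflag : (∑ x : Flags E, (if eQE G x.1 = q then u (Quot.mk (s1Rel G) (x.1, x.2)) else 0))
      = ∑ e : E, ∑ p : Bool × Bool, (if eQE G e = q then u (Quot.mk (s1Rel G) (e,p)) else 0) :=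
    Fintype.sum_prod_type _
  rw [← hflag]
  apply sum_pair_inv _ G.s1 G.s1_invol G.s1_ne
  intro f
  have h1 : eQE G (G.s1 f).1 = eQE G f.1 := by
    rw [← cQ_flag, ← cQ_flag, cQ_s1]
  have h2 : Quot.mk (s1Rel G) ((G.s1 f).1, (G.s1 f).2) = Quot.mk (s1Rel G) (f.1, f.2) := by
    show Quot.mk (s1Rel G) (G.s1 f) = Quot.mk (s1Rel G) f
    exact (Quot.sound (show s1Rel G f (G.s1 f) from rfl)).symm
  show (if eQE G (G.s1 f).1 = q then u (Quot.mk (s1Rel G) ((G.s1 f).1, (G.s1 f).2)) else 0)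
    = (if eQE G f.1 = q then u (Quot.mk (s1Rel G) (f.1, f.2)) else 0)
  rw [h1, h2]

lemma v2_one_add : (1:V2) + (0 + 1) = 0 := by decide
lemma v2_one_add' : (1:V2) + (1 + 0) = 0 := by decide
lemma v2_ne_zero {a : V2} (h : a ≠ 0) : a = 1 := by revert h; revert a; decide

lemma ker_theta_le : ∀ (n : ℕ) (d : E → V2), Theta G d = 0 →
    (univ.filter (fun e => d e ≠ 0)).card ≤ n → d ∈ LinearMap.range (Lmap G) := by
  intro n
  induction n with
  | zero =>
    intro d hd hc
    have hz : d = 0 := by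
      funext e
      by_contra h
      have hm : e ∈ univ.filter (fun e => d e ≠ 0) := Finset.mem_filter.mpr ⟨mem_univ _, h⟩
      rw [Finset.card_eq_zero.mp (Nat.le_zero.mp hc)] at hm
      exact absurd hm (Finset.notMem_empty _)
    rw [hz]; exact Submodule.zero_mem _
  | succ n ih =>
    intro d hd hc
    rcases Finset.eq_empty_or_nonempty (univ.filter (fun e => d e ≠ 0)) with h0 | ⟨x, hx⟩
    · have hz : d = 0 := by
        funext e
        by_contra h
        have hm : e ∈ univ.filter (fun e => d e ≠ 0) := Finset.mem_filter.mpr ⟨mem_univ _, h⟩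
        rw [h0] at hm
        exact absurd hm (Finset.notMem_empty _)
      rw [hz]; exact Submodule.zero_mem _
    · have hdx : d x ≠ 0 := (Finset.mem_filter.mp hx).2
      have hsum : ∑ e ∈ univ.filter (fun e => eQE G e = eQE G x), d e = 0 := congrFun hd (eQE G x)
      have hxmem : x ∈ univ.filter (fun e => eQE G e = eQE G x) :=
        Finset.mem_filter.mpr ⟨mem_univ _, rfl⟩
      have hex : ∃ y ∈ (univ.filter (fun e => eQE G e = eQE G x)).erase x, d y ≠ 0 := by
        by_contra hall
        push_neg at hall
        rw [← Finset.add_sum_erase _ _ hxmem, Finset.sum_eq_zero hall, add_zero] at hsum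
        exact hdx hsum
      obtain ⟨y, hy1, hy2⟩ := hex
      have hyne : y ≠ x := Finset.ne_of_mem_erase hy1
      have hyq : eQE G y = eQE G x := (Finset.mem_filter.mp (Finset.mem_of_mem_erase hy1)).2
      have hpath := edgeInd_mem_range G (y,(false,false)) (x,(false,false)) (Quot.eq.mp hyq)
      set w : E → V2 := fun e => edgeInd y e + edgeInd x e with hwdef
      have hw : w ∈ LinearMap.range (Lmap G) := hpath
      have hwker : Theta G w = 0 := LinearMap.mem_ker.mp (range_L_le G hw)
      have hd' : Theta G (d + w) = 0 := by rw [map_add, hd, hwker, add_zero]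
      have hdy : d y = 1 := v2_ne_zero hy2
      have hdx1 : d x = 1 := v2_ne_zero hdx
      have hsupp : (univ.filter (fun e => (d + w) e ≠ 0))
          = ((univ.filter (fun e => d e ≠ 0)).erase y).erase x := by
        ext e
        simp only [Finset.mem_erase, Finset.mem_filter, Finset.mem_univ, true_and,
          Pi.add_apply, hwdef]
        by_cases hex : e = x
        · subst hex
          rw [show edgeInd y e = (0:V2) from if_neg (fun h => hyne h.symm),
            show edgeInd e e = (1:V2) from if_pos rfl, hdx1]
          constructor
          · intro h; exact absurd v2_one_add h
          · rintro ⟨hxx, -, -⟩; exact absurd rfl hxx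
        · by_cases hey : e = y
          · subst hey
            rw [show edgeInd e e = (1:V2) from if_pos rfl,
              show edgeInd x e = (0:V2) from if_neg hyne, hdy]
            constructor
            · intro h; exact absurd v2_one_add' h
            · rintro ⟨-, hyy, -⟩; exact absurd rfl hyy
          · rw [show edgeInd y e = (0:V2) from if_neg hey,
              show edgeInd x e = (0:V2) from if_neg hex]
            rw [add_zero, add_zero]
            constructor
            · intro h; exact ⟨hex, hey, h⟩
            · rintro ⟨-, -, h⟩; exact h
      have hymem : y ∈ (univ.filter (fun e => d e ≠ 0)) :=
        Finset.mem_filter.mpr ⟨mem_univ _, hy2⟩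
      have hxmem2 : x ∈ (univ.filter (fun e => d e ≠ 0)).erase y :=
        Finset.mem_erase.mpr ⟨Ne.symm hyne, hx⟩
      have hc1 := Finset.card_erase_of_mem hymem
      have hc2 := Finset.card_erase_of_mem hxmem2
      have hcard : (univ.filter (fun e => (d+w) e ≠ 0)).card ≤ n := by
        rw [hsupp, hc2, hc1]
        omega
      have hmem := ih (d + w) hd' hcard
      have hfin : d = (d + w) + w := by funext e; exact (v2_cancel _ _).symm
      rw [hfin]
      exact Submodule.add_mem _ hmem hw

lemma range_L_eq : LinearMap.range (Lmap G) = LinearMap.ker (Theta G) := by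
  apply le_antisymm (range_L_le G)
  intro d hd
  exact ker_theta_le G _ d (LinearMap.mem_ker.mp hd) le_rfl

open scoped Classical in
lemma theta_surj : Function.Surjective (Theta G) := by
  intro φ
  have hrep : ∀ q : Quot G.compStep, eQE G ((Quot.out q).1) = q := by
    intro q
    rw [← cQ_flag]
    exact Quot.out_eq q
  refine ⟨fun e => if e = (Quot.out (eQE G e)).1 then φ (eQE G e) else 0, ?_⟩
  funext q
  show (∑ e ∈ univ.filter (fun e => eQE G e = q),
      if e = (Quot.out (eQE G e)).1 then φ (eQE G e) else 0) = φ q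
  rw [Finset.sum_congr rfl (fun e he => by rw [(Finset.mem_filter.mp he).2])]
  have hmem : (Quot.out q).1 ∈ univ.filter (fun e => eQE G e = q) :=
    Finset.mem_filter.mpr ⟨Finset.mem_univ ((Quot.out q).1), hrep q⟩
  rw [Finset.sum_eq_single (s := univ.filter (fun e => eQE G e = q))
      (f := fun e => if e = (Quot.out q).1 then φ q else 0) ((Quot.out q).1)
      (fun e _ hne => if_neg hne)
      (fun habs => absurd hmem habs)]
  exact if_pos rfl

lemma card_os : 2 * Nat.card (Quot (s1Rel G)) = 4 * Nat.card E := by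
  classical
  haveI : Fintype (Quot (s1Rel G)) := Fintype.ofFinite _
  have h := Finset.card_eq_sum_card_fiberwise
    (f := Quot.mk (s1Rel G)) (s := (univ : Finset (Flags E))) (t := univ) (fun x _ => mem_univ _)
  have hfib : ∀ o ∈ (univ : Finset (Quot (s1Rel G))),
      (univ.filter (fun f : Flags E => Quot.mk (s1Rel G) f = o)).card = 2 := by
    intro o _
    obtain ⟨f, rfl⟩ := Quot.exists_rep o
    have hset : univ.filter (fun g : Flags E => Quot.mk (s1Rel G) g = Quot.mk (s1Rel G) f)
        = {f, G.s1 f} := by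
      ext g
      simp only [Finset.mem_filter, mem_univ, true_and, Finset.mem_insert, Finset.mem_singleton]
      rw [s1orb_eq]
      constructor
      · rintro (rfl | h)
        · exact Or.inl rfl
        · right; rw [h, G.s1_invol]
      · rintro (rfl | h)
        · exact Or.inl rfl
        · right; rw [h, G.s1_invol]
    rw [hset, Finset.card_insert_of_notMem (by
      simp only [Finset.mem_singleton]
      intro h'; exact G.s1_ne f h'.symm), Finset.card_singleton]
  rw [Finset.sum_congr rfl hfib, Finset.sum_const, smul_eq_mul] at h
  have hflag : (univ : Finset (Flags E)).card = 4 * Fintype.card E := by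
    rw [Finset.card_univ]
    show Fintype.card (E × Bool × Bool) = 4 * Fintype.card E
    rw [Fintype.card_prod, Fintype.card_prod, Fintype.card_bool]
    ring
  rw [hflag, Finset.card_univ] at h
  rw [Nat.card_eq_fintype_card, Nat.card_eq_fintype_card]
  omega

lemma bounding (heuler : G.nVerts + G.nFaces = G.nEdges + 2 * G.nComps)
    (z : Flags E → V2) (hz1 : ∀ f, z (G.s1 f) = z f)
    (hz2 : ∀ e : E, ∑ p : Bool × Bool, z (e, p) = 0) :
    ∃ (α : Quot G.vertStep → V2) (β : Quot G.faceStep → V2),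
      ∀ f, z f = α (vQ G f) + β (fQ G f) := by
  classical
  haveI fV : Fintype (Quot G.vertStep) := Fintype.ofFinite _
  haveI fF : Fintype (Quot G.faceStep) := Fintype.ofFinite _
  haveI fC : Fintype (Quot G.compStep) := Fintype.ofFinite _
  haveI fO : Fintype (Quot (s1Rel G)) := Fintype.ofFinite _
  have h1 : Module.finrank V2 (LinearMap.range (bdry G))
      + Module.finrank V2 (LinearMap.ker (bdry G))
      = Fintype.card (Quot G.vertStep) + Fintype.card (Quot G.faceStep) := by
    rw [LinearMap.finrank_range_add_finrank_ker, Module.finrank_prod, Module.finrank_pi,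
      Module.finrank_pi]
  have h2 : Module.finrank V2 (LinearMap.ker (bdry G)) = Fintype.card (Quot G.compStep) := by
    rw [← range_PsiMap, ← LinearEquiv.finrank_eq
      (LinearEquiv.ofInjective (PsiMap G) (PsiMap_inj G)), Module.finrank_pi]
  have h3 : Module.finrank V2 (Zsub G) = Module.finrank V2 (LinearMap.ker (Lmap G)) := by
    rw [zsub_eq_map]
    exact (LinearEquiv.finrank_eq (Submodule.equivMapOfInjective _
      (LinearMap.funLeft_injective_of_surjective V2 V2 _
        (Quot.mk_surjective)) _)).symm
  have h4 : Module.finrank V2 (LinearMap.range (Lmap G))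
      + Module.finrank V2 (LinearMap.ker (Lmap G)) = Fintype.card (Quot (s1Rel G)) := by
    rw [LinearMap.finrank_range_add_finrank_ker, Module.finrank_pi]
  have h5 : Module.finrank V2 (LinearMap.ker (Theta G))
      = Module.finrank V2 (LinearMap.range (Lmap G)) := by rw [range_L_eq]
  have h6 : Module.finrank V2 (LinearMap.range (Theta G))
      + Module.finrank V2 (LinearMap.ker (Theta G)) = Fintype.card E := by
    rw [LinearMap.finrank_range_add_finrank_ker, Module.finrank_pi]
  have h7 : Module.finrank V2 (LinearMap.range (Theta G))
      = Fintype.card (Quot G.compStep) := by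
    rw [LinearMap.range_eq_top.mpr (theta_surj G), finrank_top, Module.finrank_pi]
  have hos := card_os G
  rw [Nat.card_eq_fintype_card, Nat.card_eq_fintype_card] at hos
  have heuler' : Fintype.card (Quot G.vertStep) + Fintype.card (Quot G.faceStep)
      = Fintype.card E + 2 * Fintype.card (Quot G.compStep) := by
    have := heuler
    unfold RibbonGraph.nVerts RibbonGraph.nFaces RibbonGraph.nEdges RibbonGraph.nComps at this
    rwa [Nat.card_eq_fintype_card, Nat.card_eq_fintype_card, Nat.card_eq_fintype_card,
      Nat.card_eq_fintype_card] at this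
  have hle : LinearMap.range (bdry G) ≤ Zsub G := by
    rintro w ⟨⟨α, β⟩, rfl⟩
    constructor
    · intro f
      show α (vQ G (G.s1 f)) + β (fQ G (G.s1 f)) = α (vQ G f) + β (fQ G f)
      rw [vQ_s1, fQ_s1]
    · intro e
      have hsa : (∑ p : Bool × Bool, α (vQ G (e, p))) = 0 := by
        apply sum_pair_inv _ (fun p => kAdd p (G.b e))
        · intro p; exact kAdd_kAdd p (G.b e)
        · intro p
          intro hcon
          exact G.b_ne e (by have := kAdd_eq_right_iff (G.b e) p; rw [kAdd_comm'] at hcon; exact (kAdd_eq_right_iff (G.b e) p).mp hcon)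
        · intro p
          show α (vQ G (e, kAdd p (G.b e))) = α (vQ G (e, p))
          have : (e, kAdd p (G.b e)) = G.σ2 (e, p) := rfl
          rw [this, vQ_σ2]
      have hsb : (∑ p : Bool × Bool, β (fQ G (e, p))) = 0 := by
        apply sum_pair_inv _ (fun p => kAdd p (G.a e))
        · intro p; exact kAdd_kAdd p (G.a e)
        · intro p
          intro hcon
          exact G.a_ne e ((kAdd_eq_right_iff (G.a e) p).mp (by rwa [kAdd_comm'] at hcon))
        · intro p
          show β (fQ G (e, kAdd p (G.a e))) = β (fQ G (e, p))
          have : (e, kAdd p (G.a e)) = G.σ0 (e, p) := rfl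
          rw [this, fQ_σ0]
      show (∑ p : Bool × Bool, (α (vQ G (e, p)) + β (fQ G (e, p)))) = 0
      rw [Finset.sum_add_distrib, hsa, hsb, add_zero]
  have hfr : Module.finrank V2 (Zsub G) ≤ Module.finrank V2 (LinearMap.range (bdry G)) := by
    omega
  have heq := Submodule.eq_of_le_of_finrank_le hle hfr
  have hzmem : z ∈ Zsub G := ⟨hz1, hz2⟩
  rw [← heq] at hzmem
  obtain ⟨⟨α, β⟩, hab⟩ := hzmem
  exact ⟨α, β, fun f => (congrFun hab f).symm⟩

end Bounding2
section Walk

open Finset RibbonGraphAux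

open scoped Classical

variable {E : Type} [Fintype E] [DecidableEq E] (G : RibbonGraph E)
variable {k : ℕ} (c : Flags E → Fin k)

/-- the transition partner of a flag in the Penrose state given by `c` -/
def tmap (g : Flags E) : Flags E :=
  if crossCond G c g.1 then G.σ0 (G.σ2 g) else G.σ0 g

lemma tmap_fst (g : Flags E) : (tmap G c g).1 = g.1 := by
  unfold tmap; split_ifs <;> rfl

lemma tmap_invol (g : Flags E) : tmap G c (tmap G c g) = g := by
  by_cases h : crossCond G c g.1
  · rw [show tmap G c g = G.σ0 (G.σ2 g) from if_pos h]
    show (if crossCond G c g.1 then G.σ0 (G.σ2 (G.σ0 (G.σ2 g))) else G.σ0 (G.σ0 (G.σ2 g))) = g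
    rw [if_pos h, σ0σ2_invol]
  · rw [show tmap G c g = G.σ0 g from if_neg h]
    show (if crossCond G c g.1 then G.σ0 (G.σ2 (G.σ0 g)) else G.σ0 (G.σ0 g)) = g
    rw [if_neg h, σ0_σ0]

lemma kAdd_fix : ∀ p q : Bool × Bool, kAdd p q = p ↔ q = (false, false) := by decide

lemma tmap_ne (g : Flags E) : tmap G c g ≠ g := by
  by_cases h : crossCond G c g.1
  · rw [show tmap G c g = G.σ0 (G.σ2 g) from if_pos h]
    rcases g with ⟨e, p⟩
    intro hcon
    have h2 : kAdd (kAdd p (G.b e)) (G.a e) = p := by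
      have := congrArg Prod.snd hcon
      simpa [RibbonGraph.σ0, RibbonGraph.σ2] using this
    rw [← kAdd_aux1] at h2
    have h3 := (kAdd_fix p (kAdd (G.a e) (G.b e))).mp h2
    exact G.ab_ne e (kAdd_eq_zero_iff (G.a e) (G.b e) |>.mp h3)
  · rw [show tmap G c g = G.σ0 g from if_neg h]
    rcases g with ⟨e, p⟩
    intro hcon
    have h2 : kAdd p (G.a e) = p := by
      have := congrArg Prod.snd hcon
      simpa [RibbonGraph.σ0] using this
    exact G.a_ne e ((kAdd_fix p (G.a e)).mp h2)

/-- the state-curve permutation -/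
noncomputable def piE : Equiv.Perm (Flags E) where
  toFun g := G.s1 (tmap G c g)
  invFun g := tmap G c (G.s1 g)
  left_inv g := by
    show tmap G c (G.s1 (G.s1 (tmap G c g))) = g
    rw [G.s1_invol, tmap_invol]
  right_inv g := by
    show G.s1 (tmap G c (tmap G c (G.s1 g))) = g
    rw [tmap_invol, G.s1_invol]

def sPerm : Equiv.Perm (Flags E) := ⟨G.s1, G.s1, G.s1_invol, G.s1_invol⟩

lemma conj_pi : sPerm G * piE G c * sPerm G = (piE G c)⁻¹ := by
  apply Equiv.ext
  intro g
  show G.s1 (G.s1 (tmap G c (G.s1 g))) = tmap G c (G.s1 g)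
  exact G.s1_invol _

lemma conj_pi_zpow (t : ℤ) : sPerm G * (piE G c)^t * sPerm G = (piE G c)^(-t) := by
  have hs : (sPerm G)⁻¹ = sPerm G := rfl
  have h1 := map_zpow (MulAut.conj (sPerm G)) (piE G c) t
  rw [MulAut.conj_apply, MulAut.conj_apply, hs, conj_pi] at h1
  rw [h1, inv_zpow, ← zpow_neg]

lemma s1_pi_zpow (t : ℤ) (x : Flags E) :
    G.s1 (((piE G c)^t) x) = ((piE G c)^(-t)) (G.s1 x) := by
  have h := DFunLike.congr_fun (conj_pi_zpow G c t) (G.s1 x)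
  simp only [Equiv.Perm.coe_mul, Function.comp_apply] at h
  rw [show (sPerm G) (G.s1 x) = x from G.s1_invol x] at h
  exact h

lemma key_ne (t : ℤ) (g : Flags E) : G.s1 g ≠ ((piE G c)^t) g := by
  intro h
  rcases Int.even_or_odd t with ⟨n, hn⟩ | ⟨n, hn⟩
  · have hfix : G.s1 (((piE G c)^n) g) = ((piE G c)^n) g := by
      calc G.s1 (((piE G c)^n) g) = ((piE G c)^(-n)) (G.s1 g) := s1_pi_zpow G c n g
        _ = ((piE G c)^(-n)) (((piE G c)^t) g) := by rw [h]
        _ = ((piE G c)^(-n) * (piE G c)^t) g := rfl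
        _ = ((piE G c)^(-n + t)) g := by rw [zpow_add]
        _ = ((piE G c)^n) g := by rw [show -n + t = n by omega]
    exact G.s1_ne _ hfix
  · have hfix : G.s1 (((piE G c)^n) g) = (piE G c) (((piE G c)^n) g) := by
      calc G.s1 (((piE G c)^n) g) = ((piE G c)^(-n)) (G.s1 g) := s1_pi_zpow G c n g
        _ = ((piE G c)^(-n) * (piE G c)^t) g := by rw [h]; rfl
        _ = ((piE G c)^(-n + t)) g := by rw [zpow_add]
        _ = ((piE G c)^(1 + n)) g := by rw [show -n + t = 1 + n by omega]
        _ = ((piE G c)^(1:ℤ) * (piE G c)^(n:ℤ)) g := by rw [zpow_add]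
        _ = (piE G c) (((piE G c)^n) g) := by rw [zpow_one]; rfl
    have h2 : tmap G c (((piE G c)^n) g) = ((piE G c)^n) g := by
      apply s1_inj G
      exact hfix.symm
    exact tmap_ne G c _ h2

/-- orbit relation of the state-curve permutation -/
def orbRel : Flags E → Flags E → Prop := fun x y => y = (piE G c) x

lemma orb_pi (x : Flags E) :
    Quot.mk (orbRel G c) ((piE G c) x) = Quot.mk (orbRel G c) x :=
  (Quot.sound (show orbRel G c x ((piE G c) x) from rfl)).symm

lemma perm_apply_inv_self {α : Type} (σ : Equiv.Perm α) (y : α) : σ (σ⁻¹ y) = y :=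
  Equiv.apply_symm_apply σ y

lemma perm_inv_apply_self {α : Type} (σ : Equiv.Perm α) (y : α) : σ⁻¹ (σ y) = y :=
  Equiv.symm_apply_apply σ y

lemma orb_pi_inv (x : Flags E) :
    Quot.mk (orbRel G c) ((piE G c)⁻¹ x) = Quot.mk (orbRel G c) x := by
  have h := orb_pi G c ((piE G c)⁻¹ x)
  rw [perm_apply_inv_self] at h
  exact h.symm

lemma orb_eq (x y : Flags E) :
    Quot.mk (orbRel G c) x = Quot.mk (orbRel G c) y ↔ ∃ t : ℤ, y = ((piE G c)^t) x := by
  constructor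
  · intro h
    have h2 := Quot.eq.mp h
    clear h
    induction h2 with
    | rel a b hab => exact ⟨1, by rw [hab, zpow_one]⟩
    | refl a => exact ⟨0, rfl⟩
    | symm a b _ ih =>
      obtain ⟨t, rfl⟩ := ih
      refine ⟨-t, ?_⟩
      show a = ((piE G c)^(-t)) (((piE G c)^t) a)
      rw [← Equiv.Perm.mul_apply, ← zpow_add, show -t + t = 0 by omega, zpow_zero]
      rfl
    | trans a b d _ _ ih1 ih2 =>
      obtain ⟨t1, rfl⟩ := ih1
      obtain ⟨t2, rfl⟩ := ih2
      refine ⟨t1 + t2, ?_⟩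
      show ((piE G c)^t2) (((piE G c)^t1) a) = ((piE G c)^(t1+t2)) a
      rw [← Equiv.Perm.mul_apply, ← zpow_add, add_comm]
  · rintro ⟨t, rfl⟩
    induction t using Int.induction_on with
    | zero => rfl
    | succ n ihn =>
      rw [show ((n:ℤ)+1) = 1 + n by ring, zpow_add, zpow_one]
      show Quot.mk _ x = Quot.mk (orbRel G c) ((piE G c) (((piE G c)^(n:ℤ)) x))
      rw [orb_pi]
      exact ihn
    | pred n ihn =>
      rw [show (-(n:ℤ)-1) = (-1) + (-(n:ℤ)) by ring, zpow_add, zpow_neg_one]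
      show Quot.mk _ x = Quot.mk (orbRel G c) ((piE G c)⁻¹ (((piE G c)^(-(n:ℤ))) x))
      rw [orb_pi_inv]
      exact ihn

/-- orientation-reversal on state curves -/
def revOrb : Quot (orbRel G c) → Quot (orbRel G c) :=
  Quot.lift (fun x => Quot.mk (orbRel G c) (G.s1 x)) (by
    rintro a b rfl
    show Quot.mk (orbRel G c) (G.s1 a) = Quot.mk (orbRel G c) (G.s1 ((piE G c) a))
    have h1 : G.s1 ((piE G c) a) = tmap G c a := by
      show G.s1 (G.s1 (tmap G c a)) = tmap G c a
      exact G.s1_invol _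
    have h2 : (piE G c) (tmap G c a) = G.s1 a := by
      show G.s1 (tmap G c (tmap G c a)) = G.s1 a
      rw [tmap_invol]
    rw [h1, ← h2, orb_pi])

lemma revOrb_mk (x : Flags E) :
    revOrb G c (Quot.mk (orbRel G c) x) = Quot.mk (orbRel G c) (G.s1 x) := rfl

lemma revOrb_invol (q : Quot (orbRel G c)) : revOrb G c (revOrb G c q) = q := by
  induction q using Quot.inductionOn with
  | h x =>
    rw [revOrb_mk, revOrb_mk, G.s1_invol]

lemma revOrb_ne (x : Flags E) :
    revOrb G c (Quot.mk (orbRel G c) x) ≠ Quot.mk (orbRel G c) x := by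
  rw [revOrb_mk]
  intro h
  obtain ⟨t, hx⟩ := (orb_eq G c (G.s1 x) x).mp h
  exact key_ne G c t (G.s1 x) (by rw [G.s1_invol]; exact hx)

/-- pairing of an orbit with its reverse -/
def pairRel : Quot (orbRel G c) → Quot (orbRel G c) → Prop :=
  fun q1 q2 => q2 = q1 ∨ q2 = revOrb G c q1

lemma pair_aux : ∀ q1 q2, Relation.EqvGen (pairRel G c) q1 q2 →
    (q2 = q1 ∨ q2 = revOrb G c q1) := by
  intro q1 q2 h
  induction h with
  | rel a b hab => exact hab
  | refl a => exact Or.inl rfl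
  | symm a b _ ih =>
    rcases ih with rfl | rfl
    · exact Or.inl rfl
    · right; rw [revOrb_invol]
  | trans a b d _ _ ih1 ih2 =>
    rcases ih1 with rfl | rfl
    · exact ih2
    · rcases ih2 with rfl | rfl
      · exact Or.inr rfl
      · left; rw [revOrb_invol]

lemma pair_eq (q1 q2 : Quot (orbRel G c)) :
    Quot.mk (pairRel G c) q1 = Quot.mk (pairRel G c) q2 ↔ (q2 = q1 ∨ q2 = revOrb G c q1) := by
  constructor
  · intro h; exact pair_aux G c q1 q2 (Quot.eq.mp h)
  · rintro (rfl | rfl)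
    · rfl
    · exact Quot.sound (Or.inr rfl)

/-- orbit selection: one orbit out of each reversal pair -/
def Sel : Quot (orbRel G c) → Prop :=
  fun q => Quot.out (Quot.mk (pairRel G c) q) = q

lemma sel_xor (q : Quot (orbRel G c)) (hne : revOrb G c q ≠ q) :
    (Sel G c q ↔ ¬ Sel G c (revOrb G c q)) := by
  have hout := (pair_eq G c q (Quot.out (Quot.mk (pairRel G c) q))).mp (Quot.out_eq _).symm
  have hmkrev : Quot.mk (pairRel G c) (revOrb G c q) = Quot.mk (pairRel G c) q :=
    (Quot.sound (show pairRel G c q (revOrb G c q) from Or.inr rfl)).symm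
  unfold Sel
  rw [hmkrev]
  rcases hout with hq | hq
  · constructor
    · intro _ h2
      exact hne (h2.symm.trans hq)
    · intro _
      exact hq
  · constructor
    · intro h3
      exact absurd (hq.symm.trans h3) hne
    · intro h3
      exact absurd hq h3

end Walk
section Claim2

open Finset RibbonGraphAux

open scoped Classical

variable {E : Type} [Fintype E] [DecidableEq E] (G : RibbonGraph E)
variable {k : ℕ} (c : Flags E → Fin k)

lemma cross_other (e : E) (hcr : crossCond G c e) (p : Bool × Bool) :
    c (G.σ0 (e,p)) = c (G.σ2 (e,p)) := by
  have h2 : G.σ0 (G.σ2 (e, kAdd p (G.b e))) = G.σ0 (e, p) := by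
    show (e, kAdd (kAdd (kAdd p (G.b e)) (G.b e)) (G.a e)) = (e, kAdd p (G.a e))
    rw [kAdd_kAdd]
  have h3 := hcr (kAdd p (G.b e))
  rw [h2] at h3
  exact h3

lemma white_of_not_cross (hxor : ∀ e, Xor' (whiteCond G c e) (crossCond G c e))
    {e : E} (h : ¬ crossCond G c e) : whiteCond G c e := by
  rcases hxor e with ⟨hw, -⟩ | ⟨hc, -⟩
  · exact hw
  · exact absurd hc h

lemma cross_ne (hxor : ∀ e, Xor' (whiteCond G c e) (crossCond G c e))
    (e : E) (hcr : crossCond G c e) (p : Bool × Bool) :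
    c (G.σ2 (e,p)) ≠ c (e,p) := by
  intro heq
  have hval : ∀ p', c (e, p') = c (e, p) := by
    intro p'
    rcases klein_cover' (G.a e) (G.b e) p' p (G.a_ne e) (G.b_ne e) (G.ab_ne e) with h|h|h|h
    · rw [h]
    · rw [h]
      have h1 : (e, kAdd p (G.a e)) = G.σ0 (e,p) := rfl
      rw [h1, cross_other G c e hcr p]
      exact heq
    · rw [h]
      exact heq
    · rw [h, kAdd_aux1]
      exact hcr p
  have hwh : whiteCond G c e := by
    intro p'
    show c (G.σ0 (e, p')) = c (e, p')
    have h1 : G.σ0 (e,p') = (e, kAdd p' (G.a e)) := rfl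
    rw [h1, hval (kAdd p' (G.a e)), hval p']
  rcases hxor e with ⟨-, hnc⟩ | ⟨-, hnw⟩
  · exact hnc hcr
  · exact hnw hwh

lemma c_tmap (hxor : ∀ e, Xor' (whiteCond G c e) (crossCond G c e)) (g : Flags E) :
    c (tmap G c g) = c g := by
  by_cases h : crossCond G c g.1
  · rw [show tmap G c g = G.σ0 (G.σ2 g) from if_pos h]
    rcases g with ⟨e,p⟩
    exact h p
  · rw [show tmap G c g = G.σ0 g from if_neg h]
    rcases g with ⟨e,p⟩
    exact white_of_not_cross G c hxor h p

lemma flag_classify (e : E) (p p' : Bool × Bool) :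
    (e,p') = (e,p) ∨ (e,p') = G.σ0 (e,p) ∨ (e,p') = G.σ2 (e,p) ∨ (e,p') = G.σ0 (G.σ2 (e,p)) := by
  rcases klein_cover' (G.a e) (G.b e) p' p (G.a_ne e) (G.b_ne e) (G.ab_ne e) with h|h|h|h
  · rw [h]; exact Or.inl rfl
  · rw [h]; exact Or.inr (Or.inl rfl)
  · rw [h]; exact Or.inr (Or.inr (Or.inl rfl))
  · rw [h, kAdd_aux1]; exact Or.inr (Or.inr (Or.inr rfl))

lemma tmap_eq_cross {g : Flags E} (h : crossCond G c g.1) : tmap G c g = G.σ0 (G.σ2 g) :=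
  if_pos h

lemma tmap_eq_white {g : Flags E} (h : ¬ crossCond G c g.1) : tmap G c g = G.σ0 g :=
  if_neg h

lemma mk_tmap (x : Flags E) :
    Quot.mk (orbRel G c) (tmap G c x) = revOrb G c (Quot.mk (orbRel G c) x) := by
  rw [revOrb_mk]
  have h2 : (piE G c) (tmap G c x) = G.s1 x := by
    show G.s1 (tmap G c (tmap G c x)) = G.s1 x
    rw [tmap_invol]
  rw [← h2, orb_pi]

lemma claim2 (hpl : G.Plane) (hs1 : s1Inv G c)
    (hxor : ∀ e, Xor' (whiteCond G c e) (crossCond G c e)) (i j : Fin k) (hij : i ≠ j) :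
    ((univ.filter (fun e => crossCond G c e ∧
        (c (e,((false,false):Bool×Bool)), c (G.σ2 (e,((false,false):Bool×Bool)))) = (j,i))).card : V2)
    + ((univ.filter (fun e => crossCond G c e ∧
        (c (e,((false,false):Bool×Bool)), c (G.σ2 (e,((false,false):Bool×Bool)))) = (i,j))).card : V2)
      = 0 := by
  obtain ⟨o, ho⟩ := hpl.1
  set zi : Flags E → V2 := fun f => if c f = i then 1 else 0 with hzi
  have hz1 : ∀ f, zi (G.s1 f) = zi f := by
    intro f; simp only [hzi]; rw [hs1 f]
  have hz2 : ∀ e : E, ∑ p : Bool × Bool, zi (e, p) = 0 := by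
    intro e
    rcases hxor e with ⟨hw, -⟩ | ⟨hc, -⟩
    · apply sum_pair_inv _ (fun p => kAdd p (G.a e)) (fun p => kAdd_kAdd p (G.a e))
        (fun p hp => G.a_ne e ((kAdd_fix p (G.a e)).mp hp))
      intro p
      simp only [hzi]
      rw [show c (e, kAdd p (G.a e)) = c (e,p) from hw p]
    · apply sum_pair_inv _ (fun p => kAdd p (kAdd (G.a e) (G.b e)))
        (fun p => kAdd_kAdd p _)
        (fun p hp => G.ab_ne e ((kAdd_eq_zero_iff _ _).mp ((kAdd_fix p _).mp hp)))
      intro p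
      simp only [hzi]
      rw [show c (e, kAdd p (kAdd (G.a e) (G.b e))) = c (e,p) from by rw [kAdd_aux1]; exact hc p]
  obtain ⟨α, β, hab⟩ := bounding G hpl.2 zi hz1 hz2
  set σf : Flags E → V2 := fun g => if o g then α (vQ G g) else β (fQ G g) with hσf
  have hloc : ∀ g : Flags E, c g = j →
      σf g + σf ((piE G c) g) = (if crossCond G c g.1 ∧ c (G.σ2 g) = i then 1 else 0) := by
    intro g hgj
    by_cases hcr : crossCond G c g.1
    · have hπ : (piE G c) g = G.s1 (G.σ0 (G.σ2 g)) := by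
        show G.s1 (tmap G c g) = _
        rw [show tmap G c g = G.σ0 (G.σ2 g) from if_pos hcr]
      have ho1 : o ((piE G c) g) = !(o g) := by
        rw [hπ, (ho _).2.2, (ho _).1, (ho _).2.1, Bool.not_not]
      have hval : σf g + σf ((piE G c) g) = zi (G.σ2 g) := by
        by_cases hog : o g
        · have h1 : σf g = α (vQ G g) := by simp [hσf, hog]
          have h2 : σf ((piE G c) g) = β (fQ G ((piE G c) g)) := by
            simp [hσf, ho1, hog]
          have h3 : fQ G ((piE G c) g) = fQ G (G.σ2 g) := by
            rw [hπ, fQ_s1, fQ_σ0]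
          rw [h1, h2, h3]
          have h4 := hab (G.σ2 g)
          rw [vQ_σ2] at h4
          exact h4.symm
        · have h1 : σf g = β (fQ G g) := by simp [hσf, hog]
          have h2 : σf ((piE G c) g) = α (vQ G ((piE G c) g)) := by simp [hσf, ho1, hog]
          have h3 : vQ G ((piE G c) g) = vQ G (G.σ0 g) := by
            rw [hπ, vQ_s1, σ0_σ2_comm, vQ_σ2]
          have h5 : fQ G g = fQ G (G.σ0 g) := (fQ_σ0 G g).symm
          rw [h1, h2, h3, h5, add_comm]
          have h4 := hab (G.σ0 g)
          have h6 : zi (G.σ0 g) = zi (G.σ2 g) := by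
            rcases g with ⟨e,p⟩
            simp only [hzi]
            rw [cross_other G c e hcr p]
          rw [← h6]
          exact h4.symm
      rw [hval]
      simp only [hzi]
      by_cases hci : c (G.σ2 g) = i
      · rw [if_pos hci, if_pos ⟨hcr, hci⟩]
      · rw [if_neg hci, if_neg (fun hcon => hci hcon.2)]
    · have hwh := white_of_not_cross G c hxor hcr
      have hπ : (piE G c) g = G.s1 (G.σ0 g) := by
        show G.s1 (tmap G c g) = _
        rw [show tmap G c g = G.σ0 g from if_neg hcr]
      have ho1 : o ((piE G c) g) = o g := by
        rw [hπ, (ho _).2.2, (ho _).1, Bool.not_not]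
      have hz : σf g + σf ((piE G c) g) = 0 := by
        by_cases hog : o g
        · have h1 : σf g = α (vQ G g) := by simp [hσf, hog]
          have h2 : σf ((piE G c) g) = α (vQ G (G.σ0 g)) := by
            rw [show σf ((piE G c) g) = α (vQ G ((piE G c) g)) by simp [hσf, ho1, hog], hπ,
              vQ_s1]
          rw [h1, h2]
          have h4 := hab g
          have h5 := hab (G.σ0 g)
          rw [fQ_σ0] at h5
          have h6 : zi g = 0 := by
            simp only [hzi]
            rw [hgj]
            exact if_neg (fun hcon => hij hcon.symm)
          have h7 : zi (G.σ0 g) = 0 := by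
            simp only [hzi]
            have hcg : c (G.σ0 g) = c g := by rcases g with ⟨e,p⟩; exact hwh p
            rw [hcg, hgj]
            exact if_neg (fun hcon => hij hcon.symm)
          rw [h6] at h4
          rw [h7] at h5
          have h8 : α (vQ G g) = β (fQ G g) := v2_add_eq_zero.mp h4.symm
          have h9 : α (vQ G (G.σ0 g)) = β (fQ G g) := v2_add_eq_zero.mp h5.symm
          rw [h8, h9, v2_add_self]
        · have h1 : σf g = β (fQ G g) := by simp [hσf, hog]
          have h2 : σf ((piE G c) g) = β (fQ G g) := by
            rw [show σf ((piE G c) g) = β (fQ G ((piE G c) g)) by simp [hσf, ho1, hog], hπ,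
              fQ_s1, fQ_σ0]
          rw [h1, h2, v2_add_self]
      rw [hz, if_neg (fun hcon => hcr hcon.1)]
  set T : Finset (Flags E) :=
    univ.filter (fun g => c g = j ∧ Sel G c (Quot.mk (orbRel G c) g)) with hT
  have hTmem : ∀ g, g ∈ T ↔ (c g = j ∧ Sel G c (Quot.mk (orbRel G c) g)) := by
    intro g; simp [hT]
  have hTpi : ∀ g, g ∈ T ↔ (piE G c) g ∈ T := by
    intro g
    rw [hTmem, hTmem]
    have hc1 : c ((piE G c) g) = c g := by
      show c (G.s1 (tmap G c g)) = c g
      rw [hs1, c_tmap G c hxor]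
    rw [hc1, orb_pi]
  have hsum0 : ∑ g ∈ T, (σf g + σf ((piE G c) g)) = 0 := by
    rw [Finset.sum_add_distrib]
    have hre : ∑ g ∈ T, σf ((piE G c) g) = ∑ g ∈ T, σf g := by
      apply Finset.sum_nbij' (i := fun g => (piE G c) g) (j := fun g => (piE G c)⁻¹ g)
      · intro a ha; exact (hTpi a).mp ha
      · intro a ha
        have := (hTpi ((piE G c)⁻¹ a)).mpr
        rw [perm_apply_inv_self] at this
        exact this ha
      · intro a _; exact perm_inv_apply_self _ _
      · intro a _; exact perm_apply_inv_self _ _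
      · intro a _; rfl
    rw [hre, v2_add_self]
  have hsum1 : ∑ g ∈ T, (σf g + σf ((piE G c) g))
      = ((T.filter (fun g => crossCond G c g.1 ∧ c (G.σ2 g) = i)).card : V2) := by
    rw [Finset.sum_congr rfl (fun g hg => hloc g ((hTmem g).mp hg).1), Finset.sum_boole]
  set D1 := univ.filter (fun e : E => crossCond G c e ∧
      (c (e,((false,false):Bool×Bool)), c (G.σ2 (e,((false,false):Bool×Bool)))) = (j,i)) with hD1
  set D2 := univ.filter (fun e : E => crossCond G c e ∧
      (c (e,((false,false):Bool×Bool)), c (G.σ2 (e,((false,false):Bool×Bool)))) = (i,j)) with hD2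
  have hD1mem : ∀ e : E, e ∈ D1 ↔ (crossCond G c e ∧ c (e,((false,false):Bool×Bool)) = j
      ∧ c (G.σ2 (e,((false,false):Bool×Bool))) = i) := by
    intro e; simp [hD1, Prod.ext_iff, and_assoc]
  have hD2mem : ∀ e : E, e ∈ D2 ↔ (crossCond G c e ∧ c (e,((false,false):Bool×Bool)) = i
      ∧ c (G.σ2 (e,((false,false):Bool×Bool))) = j) := by
    intro e; simp [hD2, Prod.ext_iff, and_assoc]
  have hbij : (T.filter (fun g => crossCond G c g.1 ∧ c (G.σ2 g) = i)).card = (D1 ∪ D2).card := by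
    apply Finset.card_bij (fun g _ => g.1)
    · rintro ⟨e, p⟩ ha
      rw [Finset.mem_filter] at ha
      obtain ⟨hT', hcr, hci⟩ := ha
      obtain ⟨hcj, hsel⟩ := (hTmem _).mp hT'
      rw [Finset.mem_union, hD1mem, hD2mem]
      rcases flag_classify G e p ((false,false)) with h|h|h|h
      · left; exact ⟨hcr, by rw [h]; exact hcj, by rw [h]; exact hci⟩
      · right; refine ⟨hcr, ?_, ?_⟩
        · rw [h, cross_other G c e hcr p]; exact hci
        · rw [h, ← σ0_σ2_comm, hcr p]; exact hcj
      · right; refine ⟨hcr, ?_, ?_⟩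
        · rw [h]; exact hci
        · rw [h, G.σ2_σ2]; exact hcj
      · left; refine ⟨hcr, ?_, ?_⟩
        · rw [h, hcr p]; exact hcj
        · rw [h, ← σ0_σ2_comm, G.σ2_σ2, cross_other G c e hcr p]; exact hci
    · rintro ⟨e1, p1⟩ ha1 ⟨e2, p2⟩ ha2 heq
      have heq' : e1 = e2 := heq
      subst heq'
      rw [Finset.mem_filter] at ha1 ha2
      obtain ⟨hT1, hcr1, hci1⟩ := ha1
      obtain ⟨hT2, -, hci2⟩ := ha2
      obtain ⟨hcj1, hsel1⟩ := (hTmem _).mp hT1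
      obtain ⟨hcj2, hsel2⟩ := (hTmem _).mp hT2
      rcases flag_classify G e1 p1 p2 with h|h|h|h
      · exact h.symm
      · exfalso
        have hne := cross_ne G c hxor e1 hcr1 p1
        rw [← cross_other G c e1 hcr1 p1] at hne
        rw [← h] at hne
        exact hne (hcj2.trans hcj1.symm)
      · exfalso
        have hne := cross_ne G c hxor e1 hcr1 p1
        rw [← h] at hne
        exact hne (hcj2.trans hcj1.symm)
      · exfalso
        have htm : (e1, p2) = tmap G c (e1, p1) := by
          rw [tmap_eq_cross G c (show crossCond G c ((e1,p1) : Flags E).1 from hcr1)]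
          exact h
        have hx := sel_xor G c (Quot.mk (orbRel G c) (e1,p1)) (revOrb_ne G c (e1,p1))
        have hs2 : Sel G c (revOrb G c (Quot.mk (orbRel G c) (e1,p1))) := by
          rw [← mk_tmap, ← htm]
          exact hsel2
        exact (hx.mp hsel1) hs2
    · intro e he
      rw [Finset.mem_union, hD1mem, hD2mem] at he
      rcases he with ⟨hcr, hj0, hi0⟩ | ⟨hcr, hi0, hj0⟩
      · by_cases hsel : Sel G c (Quot.mk (orbRel G c) ((e, ((false,false):Bool×Bool)) : Flags E))
        · refine ⟨(e, ((false,false):Bool×Bool)), ?_, rfl⟩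
          rw [Finset.mem_filter]
          exact ⟨(hTmem _).mpr ⟨hj0, hsel⟩, hcr, hi0⟩
        · refine ⟨tmap G c (e, ((false,false):Bool×Bool)), ?_, tmap_fst G c _⟩
          rw [Finset.mem_filter]
          have hsel2 : Sel G c (Quot.mk (orbRel G c) (tmap G c (e, ((false,false):Bool×Bool)))) := by
            rw [mk_tmap]
            by_contra hno
            exact hsel ((sel_xor G c _ (revOrb_ne G c _)).mpr hno)
          refine ⟨(hTmem _).mpr ⟨by rw [c_tmap G c hxor]; exact hj0, hsel2⟩, ?_, ?_⟩
          · rw [tmap_fst]; exact hcr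
          · rw [tmap_eq_cross G c (show crossCond G c ((e, ((false,false):Bool×Bool)) : Flags E).1 from hcr),
              ← σ0_σ2_comm, G.σ2_σ2, cross_other G c e hcr _]
            exact hi0
      · have htm2 : tmap G c (G.σ2 (e,((false,false):Bool×Bool))) = G.σ0 (e,((false,false):Bool×Bool)) := by
          rw [tmap_eq_cross G c (show crossCond G c (G.σ2 ((e,((false,false):Bool×Bool)) : Flags E)).1 from hcr),
            G.σ2_σ2]
        by_cases hsel : Sel G c (Quot.mk (orbRel G c) (G.σ2 ((e, ((false,false):Bool×Bool)) : Flags E)))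
        · refine ⟨G.σ2 (e, ((false,false):Bool×Bool)), ?_, rfl⟩
          rw [Finset.mem_filter]
          refine ⟨(hTmem _).mpr ⟨hj0, hsel⟩, hcr, ?_⟩
          rw [G.σ2_σ2]
          exact hi0
        · refine ⟨G.σ0 (e, ((false,false):Bool×Bool)), ?_, rfl⟩
          rw [Finset.mem_filter]
          have hsel2 : Sel G c (Quot.mk (orbRel G c) (G.σ0 ((e, ((false,false):Bool×Bool)) : Flags E))) := by
            rw [← htm2, mk_tmap]
            by_contra hno
            exact hsel ((sel_xor G c _ (revOrb_ne G c _)).mpr hno)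
          refine ⟨(hTmem _).mpr ⟨by rw [cross_other G c e hcr _]; exact hj0, hsel2⟩, hcr, ?_⟩
          rw [← σ0_σ2_comm, hcr _]
          exact hi0
  have hdisj : Disjoint D1 D2 := by
    rw [Finset.disjoint_left]
    intro e he1 he2
    rw [hD1mem e] at he1
    rw [hD2mem e] at he2
    exact hij (he2.2.1.symm.trans he1.2.1)
  have h0 : ((T.filter (fun g => crossCond G c g.1 ∧ c (G.σ2 g) = i)).card : V2) = 0 := by
    rw [← hsum1]; exact hsum0
  rw [show (D1.card : V2) + (D2.card : V2) = (((D1 ∪ D2).card : ℕ) : V2) by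
    rw [Finset.card_union_of_disjoint hdisj]; push_cast; ring]
  rw [← hbij]
  exact h0

lemma cross_even (hpl : G.Plane) (hs1 : s1Inv G c)
    (hxor : ∀ e, Xor' (whiteCond G c e) (crossCond G c e)) :
    Even (univ.filter (fun e => crossCond G c e)).card := by
  have hmod : (((univ.filter (fun e => crossCond G c e)).card : ℕ) : V2) = 0 := by
    have hfib := Finset.card_eq_sum_card_fiberwise
      (f := fun e : E => (c (e,((false,false):Bool×Bool)), c (G.σ2 (e,((false,false):Bool×Bool)))))
      (s := univ.filter (fun e => crossCond G c e)) (t := univ) (fun x _ => mem_univ _)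
    rw [hfib, Nat.cast_sum]
    have hdiag : ∀ x : Fin k,
        ((univ.filter (fun e => crossCond G c e)).filter
          (fun e => (c (e,((false,false):Bool×Bool)), c (G.σ2 (e,((false,false):Bool×Bool)))) = (x,x))) = ∅ := by
      intro x
      rw [Finset.eq_empty_iff_forall_notMem]
      intro e he
      rw [Finset.mem_filter, Finset.mem_filter] at he
      obtain ⟨⟨-, hcr⟩, hcol⟩ := he
      rw [Prod.ext_iff] at hcol
      exact cross_ne G c hxor e hcr _ (hcol.2.trans hcol.1.symm)
    apply Finset.sum_ninvolution (fun v : Fin k × Fin k => (v.2, v.1))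
    · rintro ⟨x, y⟩
      dsimp only
      by_cases hv : x = y
      · subst hv
        rw [hdiag x, Finset.card_empty]
        norm_num
      · have h2 := claim2 G c hpl hs1 hxor y x (fun h => hv h.symm)
        rw [Finset.filter_filter, Finset.filter_filter]
        exact h2
    · rintro ⟨x, y⟩ hne
      dsimp only
      intro heq
      have hyx : y = x := congrArg Prod.fst heq
      subst hyx
      apply hne
      rw [hdiag y, Finset.card_empty, Nat.cast_zero]
    · intro v; exact mem_univ _
    · rintro ⟨x, y⟩; rfl
  have hdvd := (ZMod.natCast_eq_zero_iff _ 2).mp hmod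
  exact even_iff_two_dvd.mpr hdvd

end Claim2

/-- If `G` is a plane graph, then for all positive integers `k`,
`χ(G*;k) ≤ P(G;k)`. -/
theorem stmt18 {E : Type} [Fintype E] [DecidableEq E] (G : RibbonGraph E)
    (hpl : G.Plane) (k : ℕ) (hk : 0 < k) :
    G.dualChrom.eval (k : ℤ) ≤ G.penrose.eval (k : ℤ) := by
  classical
  rw [dualChrom_eval G k, penrose_eval G k]
  have hgood : ∀ c : Flags E → Fin k, s1Inv G c →
      (∏ e : E, ((if crossCond G c e then -1 else 0) + (if whiteCond G c e then 1 else 0) : ℤ))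
      = if (∀ e, Xor' (whiteCond G c e) (crossCond G c e)) then 1 else 0 := by
    intro c hs1
    by_cases hx : ∀ e, Xor' (whiteCond G c e) (crossCond G c e)
    · rw [if_pos hx]
      rw [← Finset.prod_filter_mul_prod_filter_not Finset.univ (fun e => crossCond G c e)]
      have hc1 : ∀ e ∈ Finset.univ.filter (fun e => crossCond G c e),
          ((if crossCond G c e then (-1:ℤ) else 0) + (if whiteCond G c e then 1 else 0)) = -1 := by
        intro e he
        have hcr := (Finset.mem_filter.mp he).2
        have hnw : ¬ whiteCond G c e := by
          rcases hx e with ⟨-, hnc⟩ | ⟨-, hnw⟩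
          · exact absurd hcr hnc
          · exact hnw
        rw [if_pos hcr, if_neg hnw, add_zero]
      have hc2 : ∀ e ∈ Finset.univ.filter (fun e => ¬ crossCond G c e),
          ((if crossCond G c e then (-1:ℤ) else 0) + (if whiteCond G c e then 1 else 0)) = 1 := by
        intro e he
        have hnc := (Finset.mem_filter.mp he).2
        rw [if_neg hnc, if_pos (white_of_not_cross G c hx hnc), zero_add]
      rw [Finset.prod_congr rfl hc1, Finset.prod_congr rfl hc2, Finset.prod_const,
        Finset.prod_const, one_pow, mul_one]
      exact Even.neg_one_pow (cross_even G c hpl hs1 hx)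
    · rw [if_neg hx]
      push_neg at hx
      obtain ⟨e, he⟩ := hx
      apply Finset.prod_eq_zero (Finset.mem_univ e)
      by_cases hw : whiteCond G c e <;> by_cases hc : crossCond G c e
      · rw [if_pos hc, if_pos hw]; ring
      · exact absurd (Or.inl ⟨hw, hc⟩) he
      · exact absurd (Or.inr ⟨hc, hw⟩) he
      · rw [if_neg hc, if_neg hw]; ring
  rw [Finset.sum_congr rfl (fun c hc => hgood c (Finset.mem_filter.mp hc).2)]
  rw [← Finset.sum_filter, Finset.filter_filter, Finset.sum_const, nsmul_eq_mul, mul_one]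
  rw [Nat.card_eq_fintype_card, Fintype.card_subtype]
  have hsub : Finset.univ.filter (fun c : Flags E → Fin k => properC G c) ⊆
      Finset.univ.filter (fun c : Flags E → Fin k =>
        s1Inv G c ∧ ∀ e, Xor' (whiteCond G c e) (crossCond G c e)) := by
    intro c hc
    rw [Finset.mem_filter] at hc ⊢
    obtain ⟨-, h0, h1, h2⟩ := hc
    refine ⟨Finset.mem_univ _, h1, fun e => Or.inl ⟨fun p => h0 _, fun hcr => ?_⟩⟩
    have hcon := hcr ((false,false))
    rw [h0 (G.σ2 (e,((false,false):Bool×Bool)))] at hcon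
    exact h2 _ hcon
  exact Nat.cast_le.mpr (Finset.card_le_card hsub)

end RibbonGraph

end Penrose
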